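/- arXiv:1011.2024 — 4 statements merged into one kernel-verified Lean document; each statement's English description precedes it below -/
import Mathlib

section
/- Let Σ be a finite nonempty alphabet closed under a formal inversion, and let G be an infinite group generated by Σ. Then there exist arbitrarily long finite G-reduced words over Σ; in fact, there exists an infinite sequence p : ℤ → Σ such that every finite restriction p[m,n] is G-reduced, i.e., no nonempty finite factor represents the identity of G. -/
/-- Normalize the coerced list in the statement to an honest `List.map`. -/
private lemma prod_coe {G : Type*} [Monoid G] (q : ℤ → G) (m : ℤ) (n : ℕ) :
    ((List.range (n + 1)).map (fun k => q (m + k))).prod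
      = ((List.range (n + 1)).map (fun k : ℕ => q (m + (k : ℤ)))).prod := by
  rw [show (do let a ← List.range (n+1); pure ((a : ℕ) : ℤ))
      = (List.range (n+1)).map (fun a : ℕ => (a : ℤ)) from ?_, List.map_map]
  · rfl
  · simp only [bind_pure_comp]
    rfl

/-- Every element is a product of a list of letters from `S`. -/
private lemma word_exists {G : Type*} [Group G] (S : Finset G)
    (hSinv : ∀ a ∈ S, a⁻¹ ∈ S) (hSgen : Subgroup.closure (S : Set G) = ⊤) (g : G) :
    ∃ l : List G, (∀ x ∈ l, x ∈ S) ∧ l.prod = g := by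
  have hg : g ∈ Submonoid.closure ((S : Set G) ∪ (S : Set G)⁻¹) := by
    rw [← Subgroup.closure_toSubmonoid, hSgen]; trivial
  obtain ⟨l, hl, hp⟩ := Submonoid.exists_list_of_mem_closure hg
  refine ⟨l, fun x hx => ?_, hp⟩
  rcases hl x hx with h | h
  · exact h
  · simpa using hSinv _ h

/-- The set of products of words of length ≤ L over S is finite. -/
private lemma finite_prods {G : Type*} [Group G] (S : Finset G) (L : ℕ) :
    {g : G | ∃ l : List G, l.length ≤ L ∧ (∀ x ∈ l, x ∈ S) ∧ l.prod = g}.Finite := by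
  induction L with
  | zero =>
    refine Set.Finite.subset (Set.finite_singleton 1) ?_
    rintro g ⟨l, hl, -, hp⟩
    have : l = [] := List.length_eq_zero_iff.mp (Nat.le_zero.mp hl)
    simp [this] at hp
    simp [← hp]
  | succ L ih =>
    refine Set.Finite.subset ((S.finite_toSet.mul ih).union ih) ?_
    rintro g ⟨l, hl, hmem, hp⟩
    cases l with
    | nil => exact Or.inr ⟨[], by simp, by simp, hp⟩
    | cons a t =>
      left
      refine Set.mem_mul.mpr ⟨a, hmem a (by simp), t.prod,
        ⟨t, ?_, fun x hx => hmem x (by simp [hx]), rfl⟩, ?_⟩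
      · simpa using hl
      · simpa using hp

/-- Window lemma: for each `N` there is a sequence of letters whose factors inside
the window `[-N, N]` are all nontrivial. -/
private lemma exists_window {G : Type*} [Group G] [Infinite G] (S : Finset G)
    (s0 : G) (hs0 : s0 ∈ S)
    (hSinv : ∀ a ∈ S, a⁻¹ ∈ S) (hSgen : Subgroup.closure (S : Set G) = ⊤) (N : ℕ) :
    ∃ q : ℤ → G, (∀ i, q i ∈ S) ∧ ∀ (m : ℤ) (k : ℕ), -(N : ℤ) ≤ m → m + k ≤ N →
      ((List.range (k + 1)).map (fun j : ℕ => q (m + (j : ℤ)))).prod ≠ 1 := by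
  classical
  obtain ⟨g, hg⟩ := (finite_prods S (2 * N)).infinite_compl.nonempty
  have hex : ∃ n : ℕ, ∃ l : List G, l.length = n ∧ (∀ x ∈ l, x ∈ S) ∧ l.prod = g := by
    obtain ⟨l, hl, hp⟩ := word_exists S hSinv hSgen g
    exact ⟨l.length, l, rfl, hl, hp⟩
  obtain ⟨l, hlen, hmem, hprod⟩ := Nat.find_spec hex
  set n := Nat.find hex with hn
  have hlen' : l.length = n := hlen
  have hmin : ∀ (l' : List G), (∀ x ∈ l', x ∈ S) → l'.prod = g → n ≤ l'.length := by
    intro l' h1 h2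
    by_contra h
    exact Nat.find_min hex (by omega) ⟨l', rfl, h1, h2⟩
  have hlong : 2 * N < n := by
    by_contra h
    exact hg ⟨l, by omega, hmem, hprod⟩
  have hPinj : ∀ a b : ℕ, a < b → b ≤ n → (l.take a).prod ≠ (l.take b).prod := by
    intro a b hab hbn heq
    have hpr : (l.take a ++ l.drop b).prod = g := by
      have h1 : (l.take b).prod * (l.drop b).prod = g := by
        rw [← List.prod_append, List.take_append_drop, hprod]
      calc (l.take a ++ l.drop b).prod = (l.take a).prod * (l.drop b).prod := by
            rw [List.prod_append]
        _ = (l.take b).prod * (l.drop b).prod := by rw [heq]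
        _ = g := h1
    have hle := hmin _ (fun x hx => by
      rcases List.mem_append.mp hx with h | h
      · exact hmem x (List.mem_of_mem_take h)
      · exact hmem x (List.mem_of_mem_drop h)) hpr
    rw [List.length_append, List.length_take, List.length_drop, hlen'] at hle
    omega
  refine ⟨fun i => l.getD (i + N).toNat s0, fun i => ?_, ?_⟩
  · show l.getD (i + N).toNat s0 ∈ S
    by_cases h : (i + N).toNat < l.length
    · rw [List.getD_eq_getElem l s0 h]; exact hmem _ (List.getElem_mem h)
    · rw [List.getD_eq_default l s0 (Nat.le_of_not_lt h)]; exact hs0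
  · intro m k hm hk
    set t : ℕ := (m + N).toNat with ht
    have htk : t + k + 1 ≤ n := by omega
    have key : ∀ k' : ℕ, t + k' + 1 ≤ n →
        ((List.range (k' + 1)).map (fun j : ℕ => l.getD ((m + (j:ℤ) + N).toNat) s0)).prod
          = (l.take t).prod⁻¹ * (l.take (t + k' + 1)).prod := by
      intro k'
      induction k' with
      | zero =>
        intro hb
        have h0 : (m + ((0:ℕ):ℤ) + N).toNat = t := by omega
        have hlt : t < l.length := by omega
        simp only [List.range_succ, List.range_zero, List.nil_append, List.map_cons,
          List.map_nil, List.prod_cons, List.prod_nil, mul_one, h0, Nat.add_zero]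
        rw [List.getD_eq_getElem l s0 hlt, List.prod_take_succ l t hlt]
        group
      | succ k' ih =>
        intro hb
        have hb' : t + k' + 1 ≤ n := by omega
        have hidx : (m + ((k' + 1 : ℕ) : ℤ) + N).toNat = t + k' + 1 := by
          push_cast; omega
        have hlt : t + k' + 1 < l.length := by omega
        rw [List.range_succ, List.map_append, List.prod_append, ih hb']
        simp only [List.map_cons, List.map_nil, List.prod_cons, List.prod_nil, mul_one, hidx]
        rw [List.getD_eq_getElem l s0 hlt,
          show t + (k' + 1) + 1 = (t + k' + 1) + 1 by ring,
          List.prod_take_succ l (t + k' + 1) hlt]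
        group
    show ((List.range (k + 1)).map (fun j : ℕ =>
        l.getD ((m + (j:ℤ) + N).toNat) s0)).prod ≠ 1
    rw [key k htk]
    intro hcon
    refine hPinj t (t + k + 1) (by omega) htk ?_
    have : (l.take (t+k+1)).prod = (l.take t).prod * ((l.take t).prod⁻¹ * (l.take (t+k+1)).prod) := by
      group
    rw [hcon, mul_one] at this
    exact this.symm

/-- Let `G` be an infinite group generated by a finite symmetric set
`S` of nontrivial elements. Then there is a bi-infinite sequence `p : ℤ → G` of letters
from `S` all of whose finite factors are `G`-reduced, i.e. no nonempty finite factor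
multiplies to `1` in `G`. (In particular there exist arbitrarily long finite
`G`-reduced words.) -/
theorem exists_biinfinite_G_reduced_word {G : Type*} [Group G] [Infinite G]
    (S : Finset G) (hS1 : (1 : G) ∉ S) (hSinv : ∀ a ∈ S, a⁻¹ ∈ S)
    (hSgen : Subgroup.closure (S : Set G) = ⊤) :
    ∃ p : ℤ → G, (∀ i, p i ∈ S) ∧
      ∀ (m : ℤ) (n : ℕ), ((List.range (n + 1)).map (fun k => p (m + k))).prod ≠ 1 := by
  have hSne : S.Nonempty := by
    rcases S.eq_empty_or_nonempty with h | h
    · exfalso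
      rw [h] at hSgen
      exact absurd (show (⊥ : Subgroup G) = ⊤ by simpa using hSgen) bot_ne_top
    · exact h
  obtain ⟨s0, hs0⟩ := hSne
  choose f hf1 hf2 using fun N => exists_window S s0 hs0 hSinv hSgen N
  set U : Ultrafilter ℕ := Ultrafilter.of Filter.atTop with hU
  have hUle : (U : Filter ℕ) ≤ Filter.atTop := Ultrafilter.of_le _
  have hchoice : ∀ i : ℤ, ∃ s ∈ S, {N : ℕ | f N i = s} ∈ U := by
    intro i
    have hcover : (⋃ s ∈ (S : Set G), {N : ℕ | f N i = s}) ∈ U := by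
      have : (⋃ s ∈ (S : Set G), {N : ℕ | f N i = s}) = Set.univ := by
        ext N; simp only [Set.mem_iUnion, Set.mem_setOf_eq, Set.mem_univ, iff_true]
        exact ⟨f N i, hf1 N i, rfl⟩
      rw [this]; exact Filter.univ_mem
    obtain ⟨s, hs, hmem⟩ := (Ultrafilter.finite_biUnion_mem_iff S.finite_toSet).mp hcover
    exact ⟨s, hs, hmem⟩
  choose p hpS hpU using hchoice
  refine ⟨p, hpS, ?_⟩
  intro m k
  rw [prod_coe]
  intro hcon
  have hA : (⋂ j ∈ Finset.range (k + 1), {N : ℕ | f N (m + j) = p (m + j)}) ∈ U :=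
    (Filter.biInter_mem (Finset.range (k+1)).finite_toSet).mpr fun j _ => hpU (m + j)
  set N0 : ℕ := (|m| + k).toNat with hN0
  have hB : {N : ℕ | N0 ≤ N} ∈ U := hUle (Filter.mem_atTop N0)
  obtain ⟨N, hNA, hNB⟩ := Ultrafilter.nonempty_of_mem (Filter.inter_mem hA hB)
  simp only [Set.mem_iInter, Set.mem_setOf_eq, Finset.mem_coe, Finset.mem_range] at hNA
  have hNB' : ((N0 : ℤ)) ≤ N := by exact_mod_cast hNB
  have hN0' : (|m| + k : ℤ) ≤ N0 := by rw [hN0]; omega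
  have habs1 : m ≤ |m| := le_abs_self m
  have habs2 : -|m| ≤ m := neg_abs_le m
  have heq : ((List.range (k + 1)).map (fun j : ℕ => p (m + (j:ℤ)))).prod
      = ((List.range (k + 1)).map (fun j : ℕ => f N (m + (j:ℤ)))).prod := by
    congr 1
    apply List.map_congr_left
    intro j hj
    rw [List.mem_range] at hj
    exact (hNA j hj).symm
  rw [heq] at hcon
  exact hf2 N m k (by omega) (by omega) hcon
end

section
/- Let w : [1, α] → Σ be a closed A-word of length α with A = ⊕_{i∈Ω} ℤ·t_i discretely ordered, and suppose deg(w) = d ≥ 0. Then the set Π(w) of proper periods of w (periods π with deg(π) < d) is a subgroup of the group A^{deg<d} = {β ∈ A : deg(β) < d}. -/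
namespace Stmt10

variable {Ω : Type*} [LinearOrder Ω] [OrderBot Ω]

/-- An element of `A = ⊕_{i∈Ω} ℤ tᵢ` is positive if its leading coefficient is positive. -/
def apos (a : Ω →₀ ℤ) : Prop := ∃ d : Ω, a.support.max = (d : WithBot Ω) ∧ 0 < a d

/-- The order on `A`: `a ≤ b` iff `a = b` or `b - a` is positive. -/
def ale (a b : Ω →₀ ℤ) : Prop := a = b ∨ apos (b - a)

/-- `1 ∈ A`, the least positive element `t₀`. -/
noncomputable def aone : Ω →₀ ℤ := Finsupp.single ⊥ 1

lemma apos_zero : ¬ apos (0 : Ω →₀ ℤ) := by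
  rintro ⟨d, hd, -⟩
  simp at hd

lemma dom' {a x : Ω →₀ ℤ} {d : Ω} (h1 : a.support.max = (d : WithBot Ω)) (h2 : 0 < a d)
    (h3 : x.support.max ≤ (d : WithBot Ω)) (h4 : 0 ≤ x d) : apos (a + x) := by
  have hpos : 0 < (a + x) d := by simpa using add_pos_of_pos_of_nonneg h2 h4
  refine ⟨d, ?_, hpos⟩
  apply le_antisymm
  · refine Finset.max_le fun e he => ?_
    rcases Finset.mem_union.1 (Finsupp.support_add he) with h | h
    · exact le_trans (Finset.le_max h) h1.le
    · exact le_trans (Finset.le_max h) h3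
  · exact Finset.le_max (Finsupp.mem_support_iff.2 hpos.ne')

lemma dom {a x : Ω →₀ ℤ} {d : Ω} (h1 : a.support.max = (d : WithBot Ω)) (h2 : 0 < a d)
    (h3 : x.support.max < (d : WithBot Ω)) : apos (a + x) := by
  apply dom' h1 h2 h3.le
  have hd : d ∉ x.support := fun h => absurd (Finset.le_max h) (not_le.2 h3)
  simp [Finsupp.notMem_support_iff.1 hd]

lemma apos_add {a b : Ω →₀ ℤ} (ha : apos a) (hb : apos b) : apos (a + b) := by
  obtain ⟨da, hda, ha2⟩ := ha
  obtain ⟨db, hdb, hb2⟩ := hb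
  rcases lt_trichotomy da db with h | h | h
  · rw [add_comm]
    exact dom hdb hb2 (by rw [hda]; exact_mod_cast h)
  · subst h
    exact dom' hda ha2 hdb.le hb2.le
  · exact dom hda ha2 (by rw [hdb]; exact_mod_cast h)

lemma apos_total {a : Ω →₀ ℤ} (h : a ≠ 0) : apos a ∨ apos (-a) := by
  obtain ⟨m, hm⟩ := Finset.max_of_nonempty (Finsupp.support_nonempty_iff.2 h)
  have hmem : m ∈ a.support := Finset.mem_of_max hm
  have hne : a m ≠ 0 := Finsupp.mem_support_iff.1 hmem
  rcases hne.lt_or_gt with h' | h'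
  · right
    exact ⟨m, by rw [Finsupp.support_neg]; exact hm, by simpa using h'⟩
  · left
    exact ⟨m, hm, h'⟩

lemma apos_not_neg {a : Ω →₀ ℤ} (h : apos a) (h' : apos (-a)) : False := by
  have := apos_add h h'
  rw [add_neg_cancel] at this
  exact apos_zero this

lemma alt_of_not_ale {a b : Ω →₀ ℤ} (h : ¬ ale a b) : apos (a - b) := by
  rw [ale] at h
  push_neg at h
  obtain ⟨h1, h2⟩ := h
  rcases apos_total (sub_ne_zero.2 h1) with h3 | h3
  · exact h3
  · rw [neg_sub] at h3
    exact absurd h3 h2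

lemma apos_add_ale {x a b : Ω →₀ ℤ} (hx : apos x) (h : ale a b) : apos (x + (b - a)) := by
  rcases h with rfl | h
  · simpa using hx
  · exact apos_add hx h

lemma max_lt' {s : Finset Ω} {D : WithBot Ω} (hD : ⊥ < D)
    (h : ∀ e ∈ s, (e : WithBot Ω) < D) : s.max < D := by
  rcases s.eq_empty_or_nonempty with rfl | hs
  · simpa using hD
  · obtain ⟨m, hm⟩ := s.max_of_nonempty hs
    rw [hm]
    exact h m (Finset.mem_of_max hm)

lemma eq_zero_of_max_lt_bot {x : Ω →₀ ℤ} (h : x.support.max < ((⊥ : Ω) : WithBot Ω)) :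
    x = 0 := by
  have h0 : x.support.max = ⊥ := by
    rcases hm : x.support.max with _ | e
    · rfl
    · rw [hm] at h
      exact absurd (WithBot.coe_lt_coe.1 h) (not_lt_bot)
  exact Finsupp.support_eq_empty.1 (Finset.max_eq_bot.1 h0)

/-- Let `w : [1,α] → Σ` be a closed `A`-word of length `α` over the
discretely ordered abelian group `A = ⊕_{i∈Ω} ℤ tᵢ`, with `deg w = d`. Then the set of
proper periods of `w` (periods `π` with `deg π < d`) is a subgroup of
`A^{deg<d} = {β : deg β < d}`. -/
theorem proper_periods_subgroup {Γ : Type*} (α : Ω →₀ ℤ) (w : (Ω →₀ ℤ) → Γ) (d : Ω)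
    (hdeg : α.support.max = (d : WithBot Ω)) :
    ∃ H : AddSubgroup (Ω →₀ ℤ), ∀ π : Ω →₀ ℤ,
      π ∈ H ↔ (π.support.max < (d : WithBot Ω) ∧
        ∀ β, ale aone β → ale β α → ale aone (β + π) → ale (β + π) α →
          w β = w (β + π)) := by
  classical
  let S : Set (Ω →₀ ℤ) := {π : Ω →₀ ℤ | π.support.max < (d : WithBot Ω) ∧
    ∀ β, ale aone β → ale β α → ale aone (β + π) → ale (β + π) α → w β = w (β + π)}
  refine ⟨⟨⟨⟨S, ?_⟩, ?_⟩, ?_⟩, fun π => Iff.rfl⟩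
  · rintro π π' ⟨hdπ, hpπ⟩ ⟨hdπ', hpπ'⟩
    constructor
    · refine max_lt' (WithBot.bot_lt_coe d) fun e he => ?_
      rcases Finset.mem_union.1 (Finsupp.support_add he) with h | h
      · exact lt_of_le_of_lt (Finset.le_max h) hdπ
      · exact lt_of_le_of_lt (Finset.le_max h) hdπ'
    · intro β h1 h2 h3 h4
      rcases eq_or_lt_of_le (bot_le : (⊥ : Ω) ≤ d) with hbd | hd
      · -- degenerate case: d = ⊥ forces π = π' = 0
        rw [← hbd] at hdπ hdπ'
        rw [eq_zero_of_max_lt_bot hdπ, eq_zero_of_max_lt_bot hdπ']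
        simp
      -- main case
      have hαa : ale aone α := by
        rcases h1 with rfl | h1'
        · exact h2
        · rcases h2 with rfl | h2'
          · exact Or.inr h1'
          · refine Or.inr ?_
            have := apos_add h1' h2'
            rwa [show β - aone + (α - β) = α - aone by abel] at this
      have hα : apos (α - aone) := by
        rcases hαa with h | h
        · exfalso
          rw [← h] at hdeg
          rw [aone, Finsupp.support_single_ne_zero _ one_ne_zero, Finset.max_singleton]
            at hdeg
          exact absurd hd (by rw [WithBot.coe_inj.1 hdeg]; exact lt_irrefl _)
        · exact h
      have hdm : d ∈ α.support := Finset.mem_of_max hdeg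
      have hval : (α - aone : Ω →₀ ℤ) d = α d := by
        rw [Finsupp.sub_apply, aone, Finsupp.single_apply, if_neg hd.ne, sub_zero]
      have hmem : d ∈ (α - aone).support := by
        rw [Finsupp.mem_support_iff, hval]
        exact Finsupp.mem_support_iff.1 hdm
      have hle : (α - aone).support.max ≤ (d : WithBot Ω) := by
        refine Finset.max_le fun e he => ?_
        rcases Finset.mem_union.1 (Finsupp.support_sub he) with h | h
        · exact hdeg ▸ Finset.le_max h
        · rw [aone, Finsupp.support_single_ne_zero _ one_ne_zero,
            Finset.mem_singleton] at h
          exact WithBot.coe_le_coe.2 (h ▸ bot_le)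
      have hmax1 : (α - aone).support.max = (d : WithBot Ω) :=
        le_antisymm hle (Finset.le_max hmem)
      have hmax2 : 0 < (α - aone : Ω →₀ ℤ) d := by
        obtain ⟨e, he1, he2⟩ := hα
        have hed : e = d := WithBot.coe_inj.1 (he1.symm.trans hmax1)
        exact hed ▸ he2
      have key : ∀ x : Ω →₀ ℤ, x.support.max < (d : WithBot Ω) → apos (α - aone - x) := by
        intro x hx
        have := dom hmax1 hmax2 (x := -x) (by rwa [Finsupp.support_neg])
        rwa [← sub_eq_add_neg] at this
      have hsub : ∀ a b : Ω →₀ ℤ, a.support.max < (d : WithBot Ω) →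
          b.support.max < (d : WithBot Ω) → (a - b).support.max < (d : WithBot Ω) := by
        intro a b ha hb
        refine max_lt' (WithBot.bot_lt_coe d) fun e he => ?_
        rcases Finset.mem_union.1 (Finsupp.support_sub he) with h | h
        · exact lt_of_le_of_lt (Finset.le_max h) ha
        · exact lt_of_le_of_lt (Finset.le_max h) hb
      by_cases hπr : ale aone (β + π) ∧ ale (β + π) α
      · obtain ⟨hc1, hc2⟩ := hπr
        have e1 := hpπ β h1 h2 hc1 hc2
        have e2 := hpπ' (β + π) hc1 hc2 (by rw [add_assoc]; exact h3)
          (by rw [add_assoc]; exact h4)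
        rw [← add_assoc]
        exact e1.trans e2
      by_cases hπ'r : ale aone (β + π') ∧ ale (β + π') α
      · obtain ⟨hc1, hc2⟩ := hπ'r
        have hco : β + π' + π = β + (π + π') := by rw [add_assoc, add_comm π' π]
        have e1 := hpπ' β h1 h2 hc1 hc2
        have e2 := hpπ (β + π') hc1 hc2 (by rwa [hco]) (by rwa [hco])
        rw [hco] at e2
        exact e1.trans e2
      exfalso
      rcases not_and_or.1 hπr with hA | hB <;> rcases not_and_or.1 hπ'r with hA' | hB'
      · have p1 := alt_of_not_ale hA
        have p2 := alt_of_not_ale hA'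
        have t := apos_add_ale (apos_add_ale (apos_add p1 p2) h3) h1
        rw [show aone - (β + π) + (aone - (β + π')) + (β + (π + π') - aone) + (β - aone)
            = 0 by abel] at t
        exact apos_zero t
      · have p1 := alt_of_not_ale hA
        have p2 := alt_of_not_ale hB'
        have p3 := key (π' - π) (hsub π' π hdπ' hdπ)
        have t := apos_add (apos_add p1 p2) p3
        rw [show aone - (β + π) + (β + π' - α) + (α - aone - (π' - π)) = 0 by abel] at t
        exact apos_zero t
      · have p1 := alt_of_not_ale hB
        have p2 := alt_of_not_ale hA'
        have p3 := key (π - π') (hsub π π' hdπ hdπ')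
        have t := apos_add (apos_add p1 p2) p3
        rw [show β + π - α + (aone - (β + π')) + (α - aone - (π - π')) = 0 by abel] at t
        exact apos_zero t
      · have p1 := alt_of_not_ale hB
        have p2 := alt_of_not_ale hB'
        have t := apos_add_ale (apos_add_ale (apos_add p1 p2) h4) h2
        rw [show β + π - α + (β + π' - α) + (α - (β + (π + π'))) + (α - β) = 0 by abel] at t
        exact apos_zero t
  · constructor
    · simp [WithBot.bot_lt_coe]
    · intro β _ _ _ _
      rw [add_zero]
  · rintro π ⟨hdπ, hpπ⟩
    constructor
    · rwa [Finsupp.support_neg]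
    · intro β h1 h2 h3 h4
      have e := hpπ (β + -π) h3 h4 (by rwa [neg_add_cancel_right])
        (by rwa [neg_add_cancel_right])
      rw [neg_add_cancel_right] at e
      exact e.symm

end Stmt10
end

section
/- Let A have rank at least 2 and Σ ≠ ∅. In the greatest group quotient W(A,Σ)/{u·ū = 1 : u ∈ W(A,Σ)} of the monoid of closed A-words, the image of the free group F(Σ) under the canonical homomorphism is isomorphic to ℤ/2ℤ. In particular, for any two letters a, b ∈ Σ ∪ Σ̄, the images of ab and 1 coincide, while the image of a single letter a is nontrivial. -/
namespace NAW

open Classical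

variable {Ω : Type*} [LinearOrder Ω] [OrderBot Ω] {Γ : Type*} [Inhabited Γ]
variable {G : Type*} [Group G]

/-- Positivity in `A = ⊕_{i∈Ω} ℤ tᵢ`: the leading coefficient is positive. -/
def apos (a : Ω →₀ ℤ) : Prop := ∃ d : Ω, a.support.max = (d : WithBot Ω) ∧ 0 < a d

/-- The order of `A`: `a ≤ b` iff `a = b` or `b - a` is positive. -/
def ale (a b : Ω →₀ ℤ) : Prop := a = b ∨ apos (b - a)

/-- The least positive element `1 = t₀` of `A`. -/
noncomputable def aone : Ω →₀ ℤ := Finsupp.single ⊥ 1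

/-- A closed `A`-word over the alphabet `Γ`: a length together with a labelling of the
interval `[1, len]` (values outside this interval are irrelevant). -/
structure W (Ω Γ : Type*) [LinearOrder Ω] where
  len : Ω →₀ ℤ
  f : (Ω →₀ ℤ) → Γ

/-- Equality of closed words: same length and same letters on the interval `[1, len]`. -/
def weq (u v : W Ω Γ) : Prop :=
  u.len = v.len ∧ ∀ β, ale aone β → ale β u.len → u.f β = v.f β

/-- Concatenation of closed words. -/
noncomputable def wmul (u v : W Ω Γ) : W Ω Γ :=
  ⟨u.len + v.len, fun β => if ale β u.len then u.f β else v.f (β - u.len)⟩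

/-- The empty word. -/
def wempty : W Ω Γ := ⟨0, fun _ => default⟩

/-- The involution on closed words: read from right to left and invert each letter. -/
noncomputable def winv (bar : Γ → Γ) (u : W Ω Γ) : W Ω Γ :=
  ⟨u.len, fun β => bar (u.f (u.len - β + aone))⟩

/-- The finite word given by a list of letters, as a closed word. -/
noncomputable def fromList (l : List Γ) : W Ω Γ :=
  ⟨l.length • aone, fun β => l.getD (β ⊥ - 1).toNat default⟩

/-- Evaluation of a finite word in the group `G` via `π : Γ → G`. -/
def evalG (π : Γ → G) (l : List Γ) : G := (l.map π).prod

/-- A closed word is `G`-reduced if no nonempty finite factor evaluates to `1` in `G`. -/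
noncomputable def GReduced (π : Γ → G) (u : W Ω Γ) : Prop :=
  ∀ (β : Ω →₀ ℤ) (n : ℕ), ale aone β → ale (β + n • aone) u.len →
    evalG π ((List.range (n + 1)).map fun k => u.f (β + k • aone)) ≠ 1

/-- A closed word is finite if its length is a natural number. -/
noncomputable def IsFinite (u : W Ω Γ) : Prop := ∃ n : ℕ, u.len = n • aone

/-- A rewriting step using a rule of the finite system `S₀`. -/
noncomputable def S0Step (S₀ : Set (List Γ × List Γ)) (x y : W Ω Γ) : Prop :=
  ∃ (p q : W Ω Γ) (l r : List Γ), (l, r) ∈ S₀ ∧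
    weq x (wmul p (wmul (fromList l) q)) ∧ weq y (wmul p (wmul (fromList r) q))

/-- A rewriting step using a big rule `u ū → 1` for an infinite `G`-reduced word `u`. -/
noncomputable def BigStep (π : Γ → G) (bar : Γ → Γ) (x y : W Ω Γ) : Prop :=
  ∃ (p q u : W Ω Γ), GReduced π u ∧ ¬ IsFinite u ∧
    weq x (wmul p (wmul (wmul u (winv bar u)) q)) ∧ weq y (wmul p q)

/-- A step of the combined system `S = S₀ ∪ {u ū → 1 : u infinite G-reduced}`. -/
noncomputable def SStep (S₀ : Set (List Γ × List Γ)) (π : Γ → G) (bar : Γ → Γ)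
    (x y : W Ω Γ) : Prop :=
  S0Step S₀ x y ∨ BigStep π bar x y

/-- Step of a string rewriting system on finite words (lists). -/
def ListStep (S : Set (List Γ × List Γ)) (x y : List Γ) : Prop :=
  ∃ (p q l r : List Γ), (l, r) ∈ S ∧ x = p ++ l ++ q ∧ y = p ++ r ++ q

end NAW

namespace NAW

/-- A defining relation of the greatest group quotient
`W(A,Σ) / {u ū = 1 : u ∈ W(A,Σ)}`: either equality of closed words, or deletion of a
factor `u ū` for an arbitrary closed word `u`. -/
noncomputable def InvRel {Ω Γ : Type*} [LinearOrder Ω] [OrderBot Ω] [Inhabited Γ]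
    (bar : Γ → Γ) (x y : W Ω Γ) : Prop :=
  weq x y ∨ ∃ p q u : W Ω Γ,
    weq x (wmul p (wmul (wmul u (winv bar u)) q)) ∧ weq y (wmul p q)

end NAW

namespace NAW
set_option linter.unusedSectionVars false
open Classical
variable {Ω : Type*} [LinearOrder Ω] [OrderBot Ω]

lemma apos_iff' (z : Ω →₀ ℤ) : apos z ↔ ∃ d, 0 < z d ∧ ∀ e, d < e → z e = 0 := by
  constructor
  · rintro ⟨d, hmax, hpos⟩
    refine ⟨d, hpos, fun e he => ?_⟩
    by_contra h
    have hmem : e ∈ z.support := Finsupp.mem_support_iff.mpr h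
    have := Finset.le_max hmem
    rw [hmax] at this
    exact absurd (WithBot.coe_le_coe.mp this) (not_le.mpr he)
  · rintro ⟨d, hpos, htop⟩
    refine ⟨d, ?_, hpos⟩
    have hd : d ∈ z.support := Finsupp.mem_support_iff.mpr hpos.ne'
    apply le_antisymm
    · apply Finset.max_le
      intro e he
      rcases le_or_gt e d with h|h
      · exact WithBot.coe_le_coe.mpr h
      · exact absurd (htop e h) (Finsupp.mem_support_iff.mp he)
    · exact Finset.le_max hd

lemma apos_add {x y : Ω →₀ ℤ} (hx : apos x) (hy : apos y) : apos (x + y) := by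
  rw [apos_iff'] at *
  obtain ⟨d₁, h₁, t₁⟩ := hx
  obtain ⟨d₂, h₂, t₂⟩ := hy
  rcases lt_trichotomy d₁ d₂ with h|h|h
  · exact ⟨d₂, by simp [t₁ d₂ h, h₂], fun e he => by simp [t₁ e (h.trans he), t₂ e he]⟩
  · subst h
    exact ⟨d₁, by simp [add_pos h₁ h₂], fun e he => by simp [t₁ e he, t₂ e he]⟩
  · exact ⟨d₁, by simp [t₂ d₁ h, h₁], fun e he => by simp [t₁ e he, t₂ e (h.trans he)]⟩

lemma apos_asymm {z : Ω →₀ ℤ} (hz : apos z) : ¬ apos (-z) := by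
  rw [apos_iff'] at *
  obtain ⟨d, hd, htop⟩ := hz
  rintro ⟨d', hd', htop'⟩
  rcases lt_trichotomy d d' with h|h|h
  · rw [Finsupp.neg_apply, htop d' h] at hd'; omega
  · subst h; rw [Finsupp.neg_apply] at hd'; omega
  · have := htop' d h; rw [Finsupp.neg_apply] at this; omega

lemma apos_ne_zero {z : Ω →₀ ℤ} (hz : apos z) : z ≠ 0 := by
  rw [apos_iff'] at hz
  obtain ⟨d, hd, -⟩ := hz
  intro h; rw [h] at hd; simp at hd

lemma apos_total {z : Ω →₀ ℤ} (hz : z ≠ 0) : apos z ∨ apos (-z) := by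
  have hne : z.support.Nonempty := Finsupp.support_nonempty_iff.mpr hz
  set d := z.support.max' hne with hd
  have hmem : d ∈ z.support := z.support.max'_mem hne
  have htop : ∀ e, d < e → z e = 0 := by
    intro e he
    by_contra h
    exact absurd (z.support.le_max' e (Finsupp.mem_support_iff.mpr h)) (not_le.mpr he)
  have hzd : z d ≠ 0 := Finsupp.mem_support_iff.mp hmem
  rcases lt_or_gt_of_ne hzd with h|h
  · right
    exact (apos_iff' _).mpr ⟨d, by simpa using h, fun e he => by simp [htop e he]⟩
  · left
    exact (apos_iff' _).mpr ⟨d, h, htop⟩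

lemma ale_refl' (a : Ω →₀ ℤ) : ale a a := Or.inl rfl

lemma ale_total' (a b : Ω →₀ ℤ) : ale a b ∨ ale b a := by
  by_cases h : a = b
  · exact Or.inl (Or.inl h)
  · rcases apos_total (sub_ne_zero.mpr (fun e : b = a => h e.symm)) with h'|h'
    · exact Or.inl (Or.inr h')
    · exact Or.inr (Or.inr (by rwa [neg_sub] at h'))

lemma ale_antisymm' {a b : Ω →₀ ℤ} (h1 : ale a b) (h2 : ale b a) : a = b := by
  rcases h1 with h|h
  · exact h
  · rcases h2 with h'|h'
    · exact h'.symm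
    · exact absurd (by rwa [neg_sub] : apos (-(b - a))) (apos_asymm h)

lemma ale_trans' {a b c : Ω →₀ ℤ} (h1 : ale a b) (h2 : ale b c) : ale a c := by
  rcases h1 with h|h
  · rwa [h]
  · rcases h2 with h'|h'
    · rw [← h']; exact Or.inr h
    · exact Or.inr (by rw [show c - a = (c - b) + (b - a) by abel]; exact apos_add h' h)

lemma apos_of_not_ale {a b : Ω →₀ ℤ} (h : ¬ ale a b) : apos (a - b) := by
  rcases ale_total' a b with h'|h'
  · exact absurd h' h
  · rcases h' with h'|h'
    · exact absurd (h' ▸ ale_refl' a) h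
    · exact h'

lemma apos_aone : apos (aone : Ω →₀ ℤ) :=
  (apos_iff' _).mpr ⟨⊥, by simp [aone], fun e he => by
    simp [aone, Finsupp.single_apply, he.ne]⟩

lemma aone_min {γ : Ω →₀ ℤ} (hγ : apos γ) : ¬ apos (aone - γ) := by
  rw [apos_iff'] at *
  obtain ⟨d, hd, htop⟩ := hγ
  rintro ⟨d', hd', htop'⟩
  rcases lt_trichotomy d d' with h|h|h
  · have hb : ⊥ < d' := lt_of_le_of_lt bot_le h
    rw [Finsupp.sub_apply, htop d' h] at hd'
    simp [aone, Finsupp.single_apply, hb.ne] at hd'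
  · subst h
    rw [Finsupp.sub_apply] at hd'
    by_cases hb : d = ⊥
    · subst hb; simp [aone] at hd'; omega
    · simp [aone, Finsupp.single_apply, Ne.symm hb] at hd'; omega
  · have hb : ⊥ < d := lt_of_le_of_lt bot_le h
    have := htop' d h
    rw [Finsupp.sub_apply] at this
    simp [aone, Finsupp.single_apply, hb.ne] at this
    omega

lemma aone_le {γ : Ω →₀ ℤ} (h : apos γ) : ale aone γ := by
  rcases ale_total' aone γ with h'|h'
  · exact h'
  · rcases h' with he|hp
    · exact he ▸ ale_refl' _
    · exact absurd hp (aone_min h)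

lemma between_one_two {β : Ω →₀ ℤ} (h1 : ale aone β) (h2 : ale β (aone + aone)) :
    β = aone ∨ β = aone + aone := by
  rcases h1 with h|h
  · exact Or.inl h.symm
  · rcases h2 with h2|h2
    · exact Or.inr h2
    · exact absurd (by rw [show (aone : Ω →₀ ℤ) - (β - aone) = aone + aone - β from by abel]; exact h2)
        (aone_min h)

lemma apos_single_add {i : Ω} (hi : ⊥ < i) (c : Ω →₀ ℤ) (hc : ∀ e, ⊥ < e → c e = 0) :
    apos (Finsupp.single i 1 + c) := by
  refine (apos_iff' _).mpr ⟨i, ?_, fun e he => ?_⟩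
  · simp [hc i hi]
  · simp [Finsupp.single_apply, he.ne, hc e (hi.trans he)]

lemma weq_refl' {Γ : Type*} (u : W Ω Γ) : weq u u := ⟨rfl, fun _ _ _ => rfl⟩

end NAW

namespace NAW
set_option linter.unusedSectionVars false
open Classical
variable {Ω : Type*} [LinearOrder Ω] [OrderBot Ω] {Γ : Type*}

open Classical in
/-- The infinite word `[abab…)(…aāaā]` of length `t₁ = single i 1`. -/
noncomputable def uw (i : Ω) (a b : Γ) (bar : Γ → Γ) : W Ω Γ :=
  ⟨Finsupp.single i 1, fun β =>
    if (∀ e, ⊥ < e → β e = 0) then (if Odd (β ⊥) then a else b)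
    else if (∀ e, ⊥ < e → β e = (Finsupp.single i 1 : Ω →₀ ℤ) e) then
      (if Odd (β ⊥) then a else bar a)
    else a⟩

lemma uw_len (i : Ω) (a b : Γ) (bar : Γ → Γ) : (uw i a b bar).len = Finsupp.single i 1 := rfl

lemma uw_bottom {i : Ω} {a b : Γ} {bar : Γ → Γ} {β : Ω →₀ ℤ}
    (hβ : ∀ e, ⊥ < e → β e = 0) :
    (uw i a b bar).f β = if Odd (β ⊥) then a else b := by
  unfold uw; simp only [if_pos hβ]

lemma uw_top {i : Ω} (hi : ⊥ < i) {a b : Γ} {bar : Γ → Γ} {β : Ω →₀ ℤ}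
    (hβ : ∀ e, ⊥ < e → β e = (Finsupp.single i 1 : Ω →₀ ℤ) e) :
    (uw i a b bar).f β = if Odd (β ⊥) then a else bar a := by
  have hne : ¬ (∀ e, ⊥ < e → β e = 0) := by
    intro h
    have h1 := h i hi
    rw [hβ i hi] at h1
    simp at h1
  unfold uw; simp only [if_neg hne, if_pos hβ]

lemma uw_shift {i : Ω} {a b : Γ} {bar : Γ → Γ} (β : Ω →₀ ℤ) :
    (uw i a b bar).f (β - (aone + aone)) = (uw i a b bar).f β := by
  have hco : ∀ e, ⊥ < e → (β - (aone + aone) : Ω →₀ ℤ) e = β e := by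
    intro e he
    rw [Finsupp.sub_apply, Finsupp.add_apply]
    simp [aone, Finsupp.single_apply, he.ne]
  have hb : (β - (aone + aone) : Ω →₀ ℤ) ⊥ = β ⊥ - 2 := by
    rw [Finsupp.sub_apply, Finsupp.add_apply]
    simp [aone]
    try ring
  have hodd : Odd ((β - (aone + aone) : Ω →₀ ℤ) ⊥) ↔ Odd (β ⊥) := by
    rw [hb, Int.odd_iff, Int.odd_iff]; omega
  unfold uw
  simp only
  by_cases h1 : ∀ e, ⊥ < e → β e = 0
  · rw [if_pos h1, if_pos (fun e he => by rw [hco e he]; exact h1 e he),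
      if_congr hodd rfl rfl]
  · rw [if_neg h1, if_neg (fun h : ∀ e, ⊥ < e → (β - (aone+aone) : Ω →₀ ℤ) e = 0 =>
      h1 (fun e he => by rw [← hco e he]; exact h e he))]
    by_cases h2 : ∀ e, ⊥ < e → β e = (Finsupp.single i 1 : Ω →₀ ℤ) e
    · rw [if_pos (fun e he => by rw [hco e he]; exact h2 e he), if_pos h2,
        if_congr hodd rfl rfl]
    · rw [if_neg (fun h : ∀ e, ⊥ < e → (β - (aone+aone) : Ω →₀ ℤ) e = _ =>
        h2 (fun e he => by rw [← hco e he]; exact h e he)), if_neg h2]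

end NAW

namespace NAW
set_option linter.unusedSectionVars false
set_option maxHeartbeats 1000000
open Classical
variable {Ω : Type*} [LinearOrder Ω] [OrderBot Ω] {Γ : Type*} [Inhabited Γ]

lemma ale_elim {a b : Ω →₀ ℤ} (h : ale a b) : a = b ∨ apos (b - a) := h

lemma ale_of_apos {a b : Ω →₀ ℤ} (h : apos (b - a)) : ale a b := Or.inr h

lemma ale_of_eq {a b : Ω →₀ ℤ} (h : a = b) : ale a b := Or.inl h

lemma wmul_len (u v : W Ω Γ) : (wmul u v).len = u.len + v.len := rfl

lemma wempty_len : (wempty : W Ω Γ).len = 0 := rfl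

lemma wmul_f (u v : W Ω Γ) (β : Ω →₀ ℤ) :
    (wmul u v).f β = if ale β u.len then u.f β else v.f (β - u.len) := rfl

lemma hbot1 : ∀ e : Ω, ⊥ < e → (aone : Ω →₀ ℤ) e = 0 := fun e he => by
  simp [aone, Finsupp.single_apply, he.ne]

lemma hbot2 : ∀ e : Ω, ⊥ < e → (aone + aone : Ω →₀ ℤ) e = 0 := fun e he => by
  rw [Finsupp.add_apply, hbot1 e he]; ring

lemma haone_bot : (aone : Ω →₀ ℤ) ⊥ = 1 := by simp [aone]

lemma h2pos : apos (aone + aone : Ω →₀ ℤ) := apos_add apos_aone apos_aone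

lemma hnot_le_zero {β : Ω →₀ ℤ} (h1 : ale aone β) : ¬ ale β 0 := by
  have hposβ : apos β := by
    rcases ale_elim h1 with h | h
    · rw [← h]; exact apos_aone
    · rw [show β = (β - aone) + aone from by abel]; exact apos_add h apos_aone
  intro h
  rcases ale_elim h with h | h
  · exact apos_ne_zero hposβ h
  · exact apos_asymm hposβ (by rwa [zero_sub] at h)

section Main

variable (i : Ω) (a b : Γ) (bar : Γ → Γ)

lemma L_main (hi : ⊥ < i) :
    weq (wmul (fromList [a, b]) (wmul (wmul (uw i a b bar) (winv bar (uw i a b bar))) wempty))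
      (wmul (uw i a b bar)
        (wmul (wmul (fromList [a]) (winv bar (fromList [a]))) (winv bar (uw i a b bar)))) := by
  set t : Ω →₀ ℤ := Finsupp.single i 1 with ht
  have htbot : t ⊥ = 0 := by simp [ht, Finsupp.single_apply, hi.ne']
  have hpt : ∀ c : Ω →₀ ℤ, (∀ e, ⊥ < e → c e = 0) → apos (t + c) := fun c hc =>
    apos_single_add hi c hc
  have hpos_t : apos t := by simpa using hpt 0 (by simp)
  have hpos_tm1 : apos (t - aone) := by
    have := hpt (-aone) (fun e he => by rw [Finsupp.neg_apply, hbot1 e he]; ring)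
    rwa [← sub_eq_add_neg] at this
  have hpos_tm2 : apos (t - (aone + aone)) := by
    have := hpt (-(aone + aone)) (fun e he => by rw [Finsupp.neg_apply, hbot2 e he]; ring)
    rwa [← sub_eq_add_neg] at this
  have hpos_tp1 : apos (t + aone) := hpt aone hbot1
  have hpos_tp2 : apos (t + (aone + aone)) := hpt _ hbot2
  set u : W Ω Γ := uw i a b bar with hu
  have hulen : u.len = t := rfl
  set va : W Ω Γ := fromList [a] with hva
  have hvalen : va.len = aone := by simp [hva, fromList]
  set ub : W Ω Γ := winv bar u with hub
  have hublen : ub.len = t := rfl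
  set vb : W Ω Γ := winv bar va with hvb
  have hvblen : vb.len = aone := hvalen
  have hx0len : (fromList [a, b] : W Ω Γ).len = aone + aone := by
    simp [fromList, two_nsmul]
  -- evaluations of u
  have hu_one : u.f aone = a := by
    rw [hu, uw_bottom hbot1, haone_bot, if_pos ⟨0, by ring⟩]
  have hu_two : u.f (aone + aone) = b := by
    have h2 : ((aone + aone : Ω →₀ ℤ)) ⊥ = 2 := by
      rw [Finsupp.add_apply, haone_bot]; ring
    rw [hu, uw_bottom hbot2, h2, if_neg (by rw [Int.odd_iff]; omega)]
  have hu_tm1 : u.f (t - aone) = a := by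
    have htop1 : ∀ e, ⊥ < e → (t - aone : Ω →₀ ℤ) e = (Finsupp.single i 1 : Ω →₀ ℤ) e :=
      fun e he => by rw [Finsupp.sub_apply, hbot1 e he, ← ht]; ring
    have hbotv : (t - aone : Ω →₀ ℤ) ⊥ = -1 := by
      rw [Finsupp.sub_apply, htbot, haone_bot]; ring
    rw [hu, uw_top hi htop1, hbotv, if_pos ⟨-1, by ring⟩]
  have hu_t : u.f t = bar a := by
    have htopt : ∀ e, ⊥ < e → (t : Ω →₀ ℤ) e = (Finsupp.single i 1 : Ω →₀ ℤ) e :=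
      fun e he => by rw [← ht]
    rw [hu, uw_top hi htopt, htbot, if_neg (by rw [Int.odd_iff]; omega)]
  have hva_one : va.f aone = a := by
    rw [hva]
    show [a].getD (((aone : Ω →₀ ℤ) ⊥ - 1).toNat) default = a
    rw [haone_bot]; simp
  constructor
  · show (fromList [a, b] : W Ω Γ).len + ((u.len + ub.len) + (wempty : W Ω Γ).len)
      = u.len + ((va.len + vb.len) + ub.len)
    rw [hx0len, hulen, hublen, hvalen, hvblen]
    show (aone + aone) + ((t + t) + 0) = t + ((aone + aone) + t)
    abel
  · intro β h1 h2
    have h2' : ale β ((aone + aone) + (t + t)) := by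
      simp only [wmul_len, wempty_len, hx0len, hulen, hublen, add_zero] at h2
      exact h2
    simp only [wmul_f, wmul_len, wempty_len, hx0len, hulen, hublen, hvalen, hvblen]
    by_cases hA : ale β (aone + aone)
    · rw [if_pos hA]
      rcases between_one_two h1 hA with hβ | hβ <;> subst hβ
      · rw [if_pos (ale_of_apos hpos_tm1 : ale aone t)]
        rw [hu_one]
        show [a, b].getD (((aone : Ω →₀ ℤ) ⊥ - 1).toNat) default = a
        rw [haone_bot]; simp
      · rw [if_pos (ale_of_apos hpos_tm2 : ale (aone + aone) t)]
        rw [hu_two]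
        have h2b : ((aone + aone : Ω →₀ ℤ)) ⊥ = 2 := by
          rw [Finsupp.add_apply, haone_bot]; ring
        show [a, b].getD ((((aone + aone) : Ω →₀ ℤ) ⊥ - 1).toNat) default = b
        rw [h2b]; simp
    · rw [if_neg hA]
      by_cases hB : ale β t
      · -- 2 < β ≤ t
        rw [if_pos hB]
        have hc1 : ale (β - (aone + aone)) (t + t) := by
          refine ale_of_apos ?_
          rw [show (t + t) - (β - (aone + aone)) = (t - β) + (t + (aone + aone)) from by abel]
          rcases ale_elim hB with h | h
          · rw [h, sub_self, zero_add]; exact hpos_tp2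
          · exact apos_add h hpos_tp2
        have hc2 : ale (β - (aone + aone)) t := by
          refine ale_of_apos ?_
          rw [show t - (β - (aone + aone)) = (t - β) + (aone + aone) from by abel]
          rcases ale_elim hB with h | h
          · rw [h, sub_self, zero_add]; exact h2pos
          · exact apos_add h h2pos
        rw [if_pos hc1, if_pos hc2, hu]
        exact uw_shift β
      · rw [if_neg hB]
        have hBpos : apos (β - t) := apos_of_not_ale hB
        by_cases hC : ale (β - t) (aone + aone)
        · rw [if_pos hC]
          rcases between_one_two (aone_le hBpos) hC with hβ | hβ
          · -- β = aone + t
            have hβ' : β = aone + t := sub_eq_iff_eq_add.mp hβ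
            rw [if_pos (show ale (β - t) aone from by rw [hβ]; exact ale_refl' _)]
            rw [hβ, hva_one]
            have hγ : β - (aone + aone) = t - aone := by rw [hβ']; abel
            rw [hγ]
            rw [if_pos (ale_of_apos (show apos ((t + t) - (t - aone)) from by
              rw [show (t + t) - (t - aone) = t + aone from by abel]; exact hpos_tp1))]
            rw [if_pos (ale_of_apos (show apos (t - (t - aone)) from by
              rw [show t - (t - aone) = aone from by abel]; exact apos_aone))]
            exact hu_tm1
          · -- β = (aone+aone) + t
            have hβ' : β = (aone + aone) + t := sub_eq_iff_eq_add.mp hβ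
            have hni : ¬ ale (β - t) aone := by
              rw [hβ]
              intro h
              rcases ale_elim h with h | h
              · exact apos_ne_zero apos_aone (add_eq_left.mp h)
              · exact apos_asymm apos_aone
                  (by rwa [show aone - (aone + aone) = -aone from by abel] at h)
            rw [if_neg hni]
            have harg : β - t - aone = aone := by rw [hβ']; abel
            rw [harg]
            have hrhs : vb.f aone = bar a := by
              rw [hvb]
              show bar (va.f (va.len - aone + aone)) = bar a
              rw [hvalen, show (aone : Ω →₀ ℤ) - aone + aone = aone from by abel, hva_one]
            rw [hrhs]
            have hγ : β - (aone + aone) = t := by rw [hβ']; abel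
            rw [hγ]
            rw [if_pos (ale_of_apos (show apos ((t + t) - t) from by
              rw [show (t + t) - t = t from by abel]; exact hpos_t))]
            rw [if_pos (ale_refl' t)]
            exact hu_t
        · -- t + 2 < β
          rw [if_neg hC]
          have hCpos : apos (β - t - (aone + aone)) := apos_of_not_ale hC
          have hc1 : ale (β - (aone + aone)) (t + t) := by
            rcases ale_elim h2' with h | h
            · exact ale_of_eq (by rw [h]; abel)
            · exact ale_of_apos (by
                rwa [show (t + t) - (β - (aone + aone)) = ((aone + aone) + (t + t)) - β
                  from by abel])
          have hc2 : ¬ ale (β - (aone + aone)) t := by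
            intro h
            rcases ale_elim h with h | h
            · exact apos_ne_zero hCpos
                (by rw [show β - t - (aone + aone) = (β - (aone + aone)) - t from by abel, h,
                  sub_self])
            · exact apos_asymm hCpos
                (by rwa [show -(β - t - (aone + aone)) = t - (β - (aone + aone)) from by abel])
          rw [if_pos hc1, if_neg hc2]
          show ub.f (β - (aone + aone) - t) = ub.f (β - t - (aone + aone))
          congr 1
          abel

end Main

end NAW

namespace NAW
set_option linter.unusedSectionVars false
set_option maxHeartbeats 1000000
open Classical
variable {Ω : Type*} [LinearOrder Ω] [OrderBot Ω] {Γ : Type*} [Inhabited Γ]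

lemma two_letter (i : Ω) (a b : Γ) (bar : Γ → Γ) (hi : ⊥ < i) :
    Relation.EqvGen (InvRel bar) (fromList [a, b]) (wempty : W Ω Γ) := by
  set u : W Ω Γ := uw i a b bar with hu
  set x₀ : W Ω Γ := fromList [a, b] with hx0
  set x₁ : W Ω Γ := wmul x₀ (wmul (wmul u (winv bar u)) wempty) with hx1
  set x₃ : W Ω Γ := wmul u (winv bar u) with hx3
  have step1 : InvRel bar x₁ x₀ := by
    refine Or.inr ⟨x₀, wempty, u, weq_refl' _, ?_⟩
    refine ⟨?_, ?_⟩
    · show x₀.len = x₀.len + (0 : Ω →₀ ℤ)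
      rw [add_zero]
    · intro β hb1 hb2
      rw [wmul_f, if_pos hb2]
  have step2 : InvRel bar x₁ x₃ := by
    refine Or.inr ⟨u, winv bar u, fromList [a], ?_, weq_refl' _⟩
    exact L_main i a b bar hi
  have step3 : InvRel bar x₃ wempty := by
    refine Or.inr ⟨wempty, wempty, u, ?_, ?_⟩
    · refine ⟨?_, ?_⟩
      · show u.len + (winv bar u).len = (0 : Ω →₀ ℤ) + ((u.len + (winv bar u).len) + 0)
        rw [zero_add, add_zero]
      · intro β hb1 hb2
        have hb2' : ale β (u.len + (winv bar u).len) := hb2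
        rw [wmul_f wempty, wempty_len, if_neg (hnot_le_zero hb1), sub_zero,
          wmul_f (wmul u (winv bar u)), wmul_len, if_pos hb2', hx3]
    · refine ⟨?_, ?_⟩
      · show (0 : Ω →₀ ℤ) = 0 + 0
        rw [add_zero]
      · intro β hb1 hb2
        exact absurd hb2 (hnot_le_zero hb1)
  exact Relation.EqvGen.trans _ _ _
    (Relation.EqvGen.symm _ _ (Relation.EqvGen.rel _ _ step1))
    (Relation.EqvGen.trans _ _ _ (Relation.EqvGen.rel _ _ step2)
      (Relation.EqvGen.rel _ _ step3))

end NAW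

open NAW in
/-- Let `A` have rank at least 2 and `Σ ≠ ∅`. In the greatest group
quotient `W(A,Σ)/{u ū = 1 : u ∈ W(A,Σ)}`, the image of the free group `F(Σ)` is `ℤ/2ℤ`:
the image of any two-letter word `ab` is trivial, while the image of any single letter
is nontrivial. -/
theorem greatest_quotient_collapses_to_Z2 {Ω Γ : Type*} [LinearOrder Ω] [OrderBot Ω]
    [Inhabited Γ] [Nonempty Γ]
    (hrank : ∃ i : Ω, ⊥ < i)
    (bar : Γ → Γ) (hbar : ∀ a, bar (bar a) = a) (hfp : ∀ a, bar a ≠ a) :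
    (∀ a b : Γ,
      Relation.EqvGen (InvRel bar) (fromList [a, b]) (wempty : W Ω Γ)) ∧
    (∀ a : Γ, ¬ Relation.EqvGen (InvRel bar) (fromList [a]) (wempty : W Ω Γ)) := by
  obtain ⟨i, hi⟩ := hrank
  constructor
  · intro a b
    exact two_letter i a b bar hi
  · intro a hcon
    have key : ∀ x y : W Ω Γ, Relation.EqvGen (InvRel bar) x y →
        (x.len ⊥) % 2 = (y.len ⊥) % 2 := by
      intro x y h
      induction h with
      | rel x y hr =>
        rcases hr with ⟨hlen, -⟩ | ⟨p, q, v, ⟨hx, -⟩, ⟨hy, -⟩⟩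
        · rw [hlen]
        · rw [hx, hy]
          show (p.len + ((v.len + (winv bar v).len) + q.len)) ⊥ % 2
            = (p.len + q.len) ⊥ % 2
          have hv : (winv bar v).len = v.len := rfl
          rw [hv]
          simp only [Finsupp.add_apply]
          omega
      | refl x => rfl
      | symm x y h ih => omega
      | trans x y z h1 h2 ih1 ih2 => omega
    have hkey := key _ _ hcon
    have h1 : ((fromList [a] : W Ω Γ).len) ⊥ = 1 := by
      simp [fromList, aone]
    have h2 : ((wempty : W Ω Γ).len) ⊥ = 0 := by
      simp [wempty]
    rw [h1, h2] at hkey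
    omega
end

section
/- Let G be a finitely generated group. If the cyclic membership problem 'u ∈ ⟨v⟩?' is decidable in G (for each fixed v, uniformly in u), and H = ⟨G, t | t⁻¹At = B⟩ is an HNN extension of G in which Britton-reduced forms are effectively computable, then the cyclic membership problem is decidable in H. -/
namespace Stmt18

variable {G : Type*} [Group G]

/-- Evaluation of words over the finite alphabet `Fin k` in `G`. -/
def evalG (πg : Fin k → G) (w : List (Fin k)) : G := (w.map πg).prod

/-- The alphabet for the HNN extension: the generators of `G` together with the
stable letter `t` and its inverse. -/
abbrev ΛH (k : ℕ) := Fin k ⊕ Bool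

/-- Evaluation of words over `ΛH k` in the HNN extension `H = ⟨G, t ∣ t A t⁻¹ = B⟩`. -/
def evalH {A B : Subgroup G} {φ : A ≃* B} (πg : Fin k → G)
    (w : List (ΛH k)) : HNNExtension G A B φ :=
  (w.map (Sum.elim (fun a => HNNExtension.of (πg a))
    (fun b => if b then HNNExtension.t (G := G) (A := A) (B := B) (φ := φ)
      else (HNNExtension.t (G := G) (A := A) (B := B) (φ := φ))⁻¹))).prod

/-- A word over `ΛH k` is Britton-reduced: it contains no pinch
`t g t⁻¹` with `g ∈ A` and no pinch `t⁻¹ g t` with `g ∈ B`. -/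
def BrittonReduced {A B : Subgroup G} (πg : Fin k → G) (w : List (ΛH k)) : Prop :=
  (¬ ∃ (u v : List (ΛH k)) (g : List (Fin k)),
      w = u ++ [Sum.inr true] ++ g.map Sum.inl ++ [Sum.inr false] ++ v ∧
      evalG πg g ∈ A) ∧
  (¬ ∃ (u v : List (ΛH k)) (g : List (Fin k)),
      w = u ++ [Sum.inr false] ++ g.map Sum.inl ++ [Sum.inr true] ++ v ∧
      evalG πg g ∈ B)

section Basic

open HNNExtension

variable {k : ℕ} {A B : Subgroup G} {φ : A ≃* B} (πg : Fin k → G)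

local notation "H" => HNNExtension G A B φ

@[simp] lemma evalG_nil : evalG πg [] = 1 := rfl

@[simp] lemma evalG_cons (a : Fin k) (w : List (Fin k)) :
    evalG πg (a :: w) = πg a * evalG πg w := by simp [evalG]

@[simp] lemma evalG_append (w₁ w₂ : List (Fin k)) :
    evalG πg (w₁ ++ w₂) = evalG πg w₁ * evalG πg w₂ := by simp [evalG]

@[simp] lemma evalH_nil : evalH (A := A) (B := B) (φ := φ) πg [] = 1 := rfl

@[simp] lemma evalH_append (w₁ w₂ : List (ΛH k)) :
    evalH (A := A) (B := B) (φ := φ) πg (w₁ ++ w₂)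
      = evalH (A := A) (B := B) (φ := φ) πg w₁ * evalH (A := A) (B := B) (φ := φ) πg w₂ := by
  simp [evalH]

@[simp] lemma evalH_cons (x : ΛH k) (w : List (ΛH k)) :
    evalH (A := A) (B := B) (φ := φ) πg (x :: w)
      = (Sum.elim (fun a => (of (πg a) : H)) (fun b => if b then t else t⁻¹) x) *
        evalH (A := A) (B := B) (φ := φ) πg w := by
  simp [evalH]

lemma evalH_inl_map (g : List (Fin k)) :
    evalH (A := A) (B := B) (φ := φ) πg (g.map Sum.inl) = of (evalG πg g) := by
  induction g with
  | nil => simp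
  | cons a w ih => simp [ih]

/-- sign of a `t`-letter -/
def tunit (b : Bool) : ℤˣ := if b then 1 else -1

lemma evalH_inr (b : Bool) :
    evalH (A := A) (B := B) (φ := φ) πg [Sum.inr b] = (t : H) ^ ((tunit b : ℤˣ) : ℤ) := by
  cases b <;> simp [tunit]

/-- the product of a list of pairs `(u, g)` as `t^u * g` -/
def tprod (l : List (ℤˣ × G)) : H :=
  (l.map (fun x => (t : H) ^ ((x.1 : ℤˣ) : ℤ) * of x.2)).prod

def seqProd (g : G) (l : List (ℤˣ × G)) : H := of g * tprod l

@[simp] lemma tprod_nil : tprod (A := A) (B := B) (φ := φ) ([] : List (ℤˣ × G)) = 1 := rfl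

@[simp] lemma tprod_cons (x : ℤˣ × G) (l : List (ℤˣ × G)) :
    tprod (A := A) (B := B) (φ := φ) (x :: l)
      = (t : H) ^ ((x.1 : ℤˣ) : ℤ) * of x.2 * tprod l := by
  simp [tprod]

@[simp] lemma tprod_append (l₁ l₂ : List (ℤˣ × G)) :
    tprod (A := A) (B := B) (φ := φ) (l₁ ++ l₂)
      = tprod (A := A) (B := B) (φ := φ) l₁ * tprod (A := A) (B := B) (φ := φ) l₂ := by
  simp [tprod]

lemma ReducedWord.prod_eq (w : HNNExtension.NormalWord.ReducedWord G A B) :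
    w.prod φ = seqProd w.head w.toList := rfl

end Basic

section Parse

open HNNExtension

variable {k : ℕ} {A B : Subgroup G} {φ : A ≃* B} (πg : Fin k → G)

local notation "H" => HNNExtension G A B φ

def parse : List (ΛH k) → List (Fin k) × List (Bool × List (Fin k))
  | [] => ([], [])
  | Sum.inl a :: w => ((parse w).1.cons a, (parse w).2)
  | Sum.inr b :: w => ([], (b, (parse w).1) :: (parse w).2)

def blocks (l : List (Bool × List (Fin k))) : List (ℤˣ × G) :=
  l.map (fun x => (tunit x.1, evalG πg x.2))

lemma parse_reconstruct (w : List (ΛH k)) :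
    w = ((parse w).1).map Sum.inl ++
      ((parse w).2.map (fun x => Sum.inr x.1 :: (x.2.map Sum.inl))).flatten := by
  induction w with
  | nil => rfl
  | cons x w ih =>
    cases x with
    | inl a =>
      simp only [parse, List.map_cons, List.cons_append]
      exact congrArg _ ih
    | inr b =>
      simp only [parse, List.map_nil, List.map_cons, List.nil_append, List.flatten_cons,
        List.cons_append]
      exact congrArg _ ih

lemma evalH_eq_seqProd (w : List (ΛH k)) :
    evalH (A := A) (B := B) (φ := φ) πg w
      = seqProd (evalG πg (parse w).1) (blocks πg (parse w).2) := by
  induction w with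
  | nil => simp [seqProd, parse, blocks]
  | cons x w ih =>
    cases x with
    | inl a =>
      simp only [evalH_cons, Sum.elim_inl, ih, parse, seqProd, blocks, evalG_cons, map_mul,
        mul_assoc]
    | inr b =>
      simp only [evalH_cons, Sum.elim_inr, ih, parse, seqProd, blocks, List.map_cons, tprod_cons,
        evalG_nil, map_one, one_mul, mul_assoc]
      cases b <;> simp [tunit]

lemma exists_violation {α : Type*} {R : α → α → Prop} :
    ∀ {l : List α}, ¬ l.Chain' R → ∃ l₁ a b l₂, l = l₁ ++ a :: b :: l₂ ∧ ¬ R a b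
  | [], h => absurd List.isChain_nil h
  | [_], h => absurd (List.isChain_singleton _) h
  | x :: y :: rest, h => by
    unfold List.Chain' at h
    rw [List.isChain_cons_cons] at h
    rcases Classical.em (R x y) with hR | hR
    · have hyc : ¬ (y :: rest).Chain' R := fun hc => h ⟨hR, hc⟩
      obtain ⟨l₁, a, b, l₂, heq, hab⟩ := exists_violation hyc
      exact ⟨x :: l₁, a, b, l₂, by rw [List.cons_append, ← heq], hab⟩
    · exact ⟨[], x, y, rest, rfl, hR⟩

lemma chain'_parse {w : List (ΛH k)} (h : BrittonReduced (A := A) (B := B) πg w) :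
    ((parse w).2).Chain' (fun x y : Bool × List (Fin k) =>
      evalG πg x.2 ∈ toSubgroup A B (tunit x.1) → tunit x.1 = tunit y.1) := by
  by_contra hc
  obtain ⟨m₁, x, y, m₂, heq, hxy⟩ := exists_violation hc
  rw [Classical.not_imp] at hxy
  obtain ⟨hmem, hne⟩ := hxy
  have hrec := parse_reconstruct w
  rw [heq] at hrec
  obtain ⟨bx, gx⟩ := x
  obtain ⟨by', gy⟩ := y
  simp only at hmem hne
  have hby : by' = !bx := by
    cases bx <;> cases by' <;> first | rfl | exact absurd rfl hne
  subst hby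
  cases bx with
  | true =>
    refine h.1 ⟨(parse w).1.map Sum.inl ++
        (m₁.map (fun z : Bool × List (Fin k) => Sum.inr z.1 :: (z.2.map Sum.inl))).flatten,
      gy.map Sum.inl ++
        (m₂.map (fun z : Bool × List (Fin k) => Sum.inr z.1 :: (z.2.map Sum.inl))).flatten,
      gx, ?_, by simpa [tunit] using hmem⟩
    conv_lhs => rw [hrec]
    simp [List.append_assoc]
  | false =>
    refine h.2 ⟨(parse w).1.map Sum.inl ++
        (m₁.map (fun z : Bool × List (Fin k) => Sum.inr z.1 :: (z.2.map Sum.inl))).flatten,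
      gy.map Sum.inl ++
        (m₂.map (fun z : Bool × List (Fin k) => Sum.inr z.1 :: (z.2.map Sum.inl))).flatten,
      gx, ?_, by simpa [tunit] using hmem⟩
    conv_lhs => rw [hrec]
    simp [List.append_assoc]

lemma chain'_blocks {w : List (ΛH k)} (h : BrittonReduced (A := A) (B := B) πg w) :
    (blocks πg (parse w).2).Chain' (fun a b : ℤˣ × G =>
      a.2 ∈ toSubgroup A B a.1 → a.1 = b.1) := by
  unfold List.Chain'
  rw [blocks, List.isChain_map]
  exact chain'_parse πg h

/-- the `ReducedWord` obtained from a Britton-reduced word -/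
def toRW {w : List (ΛH k)} (h : BrittonReduced (A := A) (B := B) πg w) :
    HNNExtension.NormalWord.ReducedWord G A B :=
  { head := evalG πg (parse w).1
    toList := blocks πg (parse w).2
    chain := chain'_blocks πg h }

lemma toRW_prod {w : List (ΛH k)} (h : BrittonReduced (A := A) (B := B) πg w) :
    (toRW πg h).prod φ = evalH (A := A) (B := B) (φ := φ) πg w :=
  (evalH_eq_seqProd πg w).symm

end Parse

section Reduce

open HNNExtension

variable {k : ℕ} {A B : Subgroup G} {φ : A ≃* B}

local notation "H" => HNNExtension G A B φ

lemma units_eq_neg_of_ne {u v : ℤˣ} (h : u ≠ v) : v = -u := by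
  rcases Int.units_eq_one_or u with rfl | rfl <;>
    rcases Int.units_eq_one_or v with rfl | rfl <;> simp_all

lemma t_conj_eq (u : ℤˣ) (h : G) (hmem : h ∈ toSubgroup A B u) :
    (t : H) ^ (u : ℤ) * of h * (t : H) ^ ((-u : ℤˣ) : ℤ)
      = of ((toSubgroupEquiv φ u ⟨h, hmem⟩ : G)) := by
  rcases Int.units_eq_one_or u with rfl | rfl
  · have := equiv_eq_conj (φ := φ) ⟨h, hmem⟩
    simp only [Units.val_one, zpow_one, Units.val_neg, zpow_neg]
    rw [toSubgroupEquiv_one]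
    exact this.symm
  · have := equiv_symm_eq_conj (φ := φ) ⟨h, hmem⟩
    simp only [Units.val_neg, Units.val_one, zpow_neg, zpow_one, neg_neg, inv_inv]
    rw [toSubgroupEquiv_neg_one]
    exact this.symm

/-- Every `(head, list)` sequence is represented by a reduced word whose list is no longer. -/
lemma exists_reduced :
    ∀ (n : ℕ) (g : G) (l : List (ℤˣ × G)), l.length ≤ n →
      ∃ rw : HNNExtension.NormalWord.ReducedWord G A B,
        rw.prod φ = seqProd g l ∧ rw.toList.length ≤ l.length
  | _, g, [], _ => ⟨⟨g, [], List.isChain_nil⟩, by simp [ReducedWord.prod_eq], by simp⟩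
  | 0, _, _ :: _, h => absurd h (by simp)
  | n+1, g, (u1, g1) :: rest, h => by
    obtain ⟨⟨h1, m, ch⟩, hprod, hlen⟩ :=
      exists_reduced n g1 rest (Nat.le_of_succ_le_succ (by simpa using h))
    rw [ReducedWord.prod_eq] at hprod
    by_cases hch : List.Chain' (fun a b : ℤˣ × G => a.2 ∈ toSubgroup A B a.1 → a.1 = b.1)
        ((u1, h1) :: m)
    · refine ⟨⟨g, (u1, h1) :: m, hch⟩, ?_, by simpa using Nat.succ_le_succ hlen⟩
      rw [ReducedWord.prod_eq]
      simp only [seqProd, tprod_cons, mul_assoc] at hprod ⊢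
      rw [hprod]
    · have hP : ¬ ∀ y ∈ m.head?, ((u1, h1).2 ∈ toSubgroup A B (u1, h1).1 → (u1, h1).1 = y.1) :=
        fun hP => hch (List.isChain_cons.mpr ⟨hP, ch⟩)
      push_neg at hP
      obtain ⟨y, hy, hmem, hne⟩ := hP
      cases m with
      | nil => simp at hy
      | cons y' m' =>
        have hyy : y' = y := by simpa using hy
        have hy1 : y'.1 = -u1 := by rw [hyy]; exact units_eq_neg_of_ne hne
        have key : seqProd (φ := φ) g ((u1, g1) :: rest)
            = seqProd (φ := φ) (g * (toSubgroupEquiv φ u1 ⟨h1, hmem⟩ : G) * y'.2) m' := by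
          calc seqProd (φ := φ) g ((u1, g1) :: rest)
              = of g * ((t : H) ^ (u1 : ℤ) * (of g1 * tprod rest)) := by
                simp [seqProd, tprod_cons, mul_assoc]
            _ = of g * ((t : H) ^ (u1 : ℤ) * (of h1 * tprod (y' :: m'))) := by
                rw [show (of h1 : H) * tprod (y' :: m') = of g1 * tprod rest by
                  simpa [seqProd] using hprod]
            _ = of g * (((t : H) ^ (u1 : ℤ) * of h1 * (t : H) ^ ((y'.1 : ℤˣ) : ℤ)) *
                  (of y'.2 * tprod m')) := by
                simp [tprod_cons, mul_assoc]
            _ = of g * (of ((toSubgroupEquiv φ u1 ⟨h1, hmem⟩ : G)) * (of y'.2 * tprod m')) := by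
                rw [hy1, t_conj_eq]
            _ = seqProd (φ := φ) (g * (toSubgroupEquiv φ u1 ⟨h1, hmem⟩ : G) * y'.2) m' := by
                simp [seqProd, mul_assoc]
        have hrest : rest.length ≤ n := by simpa using h
        have hm' : m'.length + 1 ≤ rest.length := by simpa using hlen
        obtain ⟨rw', hrw1, hrw2⟩ :=
          exists_reduced n (g * (toSubgroupEquiv φ u1 ⟨h1, hmem⟩ : G) * y'.2) m'
            (by omega)
        refine ⟨rw', by rw [hrw1, key], ?_⟩
        simp only [List.length_cons]
        omega

end Reduce

section Power

open HNNExtension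

variable {k : ℕ} {A B : Subgroup G} {φ : A ≃* B}

local notation "H" => HNNExtension G A B φ

/-- Condition for chains in reduced words. -/
def Cnd (A B : Subgroup G) : (ℤˣ × G) → (ℤˣ × G) → Prop :=
  fun a b => a.2 ∈ toSubgroup A B a.1 → a.1 = b.1

/-- copy of `l` with `g0` multiplied into the last entry -/
def lmod (g0 : G) (l : List (ℤˣ × G)) : List (ℤˣ × G) :=
  l.dropLast ++ (l.getLast?.map (fun a => (a.1, a.2 * g0))).toList

lemma lmod_eq {g0 : G} {l : List (ℤˣ × G)} (h : l ≠ []) :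
    lmod g0 l = l.dropLast ++ [((l.getLast h).1, (l.getLast h).2 * g0)] := by
  rw [lmod, List.getLast?_eq_getLast h]
  rfl

lemma length_lmod {g0 : G} {l : List (ℤˣ × G)} (h : l ≠ []) :
    (lmod g0 l).length = l.length := by
  rw [lmod_eq h]
  conv_rhs => rw [← List.dropLast_append_getLast h]
  simp

lemma tprod_lmod {g0 : G} {l : List (ℤˣ × G)} (h : l ≠ []) :
    tprod (A := A) (B := B) (φ := φ) (lmod g0 l) = tprod (φ := φ) l * of g0 := by
  rw [lmod_eq h]
  conv_rhs => rw [← List.dropLast_append_getLast h]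
  simp [mul_assoc]

lemma head_fst_lmod {g0 : G} {l : List (ℤˣ × G)} (h : l ≠ []) :
    (lmod g0 l).head?.map Prod.fst = l.head?.map Prod.fst := by
  cases l with
  | nil => exact absurd rfl h
  | cons x xs =>
    cases xs with
    | nil => simp [lmod]
    | cons y ys => simp [lmod_eq h, List.dropLast_cons₂]

lemma lmod_ne_nil {g0 : G} {l : List (ℤˣ × G)} (h : l ≠ []) : lmod g0 l ≠ [] := by
  rw [lmod_eq h]
  simp

lemma chain'_snoc_fst {d : List (ℤˣ × G)} {a b : ℤˣ × G} (hab : b.1 = a.1)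
    (ch : (d ++ [a]).Chain' (Cnd A B)) : (d ++ [b]).Chain' (Cnd A B) := by
  unfold List.Chain' at ch ⊢
  rw [List.isChain_append] at ch ⊢
  refine ⟨ch.1, List.isChain_singleton _, ?_⟩
  intro x hx y hy
  simp only [List.head?_cons, Option.mem_def, Option.some.injEq] at hy
  subst hy
  intro hmem
  rw [hab]
  exact (ch.2.2 x hx a (by simp)) hmem

lemma chain'_lmod {g0 : G} {l : List (ℤˣ × G)} (h : l ≠ [])
    (ch : l.Chain' (Cnd A B)) : (lmod g0 l).Chain' (Cnd A B) := by
  have hl2 : l = l.dropLast ++ [l.getLast h] := (List.dropLast_append_getLast h).symm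
  rw [lmod_eq h]
  rw [hl2] at ch
  exact chain'_snoc_fst (a := l.getLast h) rfl ch

lemma head?_fst_pow {g0 : G} {l : List (ℤˣ × G)} (h : l ≠ []) :
    ∀ n : ℕ, ((List.replicate n (lmod g0 l)).flatten ++ l).head?.map Prod.fst
      = l.head?.map Prod.fst
  | 0 => by simp
  | n+1 => by
    rw [List.replicate_succ, List.flatten_cons, List.append_assoc,
      List.head?_append_of_ne_nil _ (lmod_ne_nil h), head_fst_lmod h]

lemma chain'_pow {g0 : G} {l : List (ℤˣ × G)} (h : l ≠ [])
    (ch : l.Chain' (Cnd A B))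
    (cr : ∀ a ∈ l.getLast?, ∀ b ∈ l.head?, (a.2 * g0 ∈ toSubgroup A B a.1 → a.1 = b.1)) :
    ∀ n : ℕ, ((List.replicate n (lmod g0 l)).flatten ++ l).Chain' (Cnd A B)
  | 0 => by simpa using ch
  | n+1 => by
    have ih := chain'_pow h ch cr n
    rw [List.replicate_succ, List.flatten_cons, List.append_assoc]
    unfold List.Chain'
    rw [List.isChain_append]
    refine ⟨chain'_lmod h ch, ih, ?_⟩
    intro x hx y hy
    rw [lmod_eq h, List.getLast?_concat, Option.mem_def, Option.some.injEq] at hx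
    subst hx
    intro hmem
    rw [Option.mem_def] at hy
    have hyfst : some y.1 = l.head?.map Prod.fst := by
      have hh := head?_fst_pow (g0 := g0) h n
      rw [hy] at hh
      simpa using hh
    have hl2 : l.head? = some (l.head h) := List.head?_eq_head h
    rw [hl2, Option.map_some] at hyfst
    have hy1 : y.1 = (l.head h).1 := by simpa using hyfst
    have := cr (l.getLast h) (List.getLast?_eq_getLast h ▸ rfl) (l.head h)
      (by rw [hl2]; rfl) hmem
    rw [hy1]
    exact this

lemma pow_seqProd {g0 : G} {l : List (ℤˣ × G)} (h : l ≠ []) :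
    ∀ n : ℕ, (seqProd (φ := φ) g0 l) ^ (n + 1)
      = seqProd (φ := φ) g0 ((List.replicate n (lmod g0 l)).flatten ++ l)
  | 0 => by simp
  | n+1 => by
    rw [pow_succ', pow_seqProd h n, List.replicate_succ, List.flatten_cons, List.append_assoc]
    simp only [seqProd, tprod_append, tprod_lmod h]
    group

/-- Powers of a "cyclically reduced" reduced word are reduced, with multiplicative length. -/
lemma exists_rw_pow (w : HNNExtension.NormalWord.ReducedWord G A B) (h : w.toList ≠ [])
    (cr : ∀ a ∈ w.toList.getLast?, ∀ b ∈ w.toList.head?,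
      (a.2 * w.head ∈ toSubgroup A B a.1 → a.1 = b.1)) (n : ℕ) :
    ∃ rww : HNNExtension.NormalWord.ReducedWord G A B,
      rww.prod φ = (w.prod φ) ^ (n + 1) ∧ rww.toList.length = (n + 1) * w.toList.length := by
  have ch : w.toList.Chain' (Cnd A B) := w.chain
  refine ⟨⟨w.head, (List.replicate n (lmod w.head w.toList)).flatten ++ w.toList,
    chain'_pow h ch cr n⟩, ?_, ?_⟩
  · rw [ReducedWord.prod_eq, ReducedWord.prod_eq, pow_seqProd h n]
  · simp only [List.length_append, List.length_flatten, List.map_replicate, length_lmod h,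
      List.sum_replicate, smul_eq_mul]
    ring

end Power


section CyclicReduce

open HNNExtension

variable {A B : Subgroup G} {φ : A ≃* B}

local notation "H" => HNNExtension G A B φ

/-- cyclically reduced condition -/
def CRcond (w : HNNExtension.NormalWord.ReducedWord G A B) : Prop :=
  ∀ a ∈ w.toList.getLast?, ∀ b ∈ w.toList.head?,
    (a.2 * w.head ∈ toSubgroup A B a.1 → a.1 = b.1)

lemma exists_seqProd_mul_of (g : G) (l : List (ℤˣ × G)) (x : G) :
    ∃ (g' : G) (l' : List (ℤˣ × G)), seqProd (φ := φ) g l * of x = seqProd (φ := φ) g' l' ∧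
      l'.length = l.length := by
  rcases eq_or_ne l [] with rfl | h
  · exact ⟨g * x, [], by simp [seqProd, mul_assoc], rfl⟩
  · refine ⟨g, lmod x l, ?_, length_lmod h⟩
    rw [seqProd, seqProd, tprod_lmod h, mul_assoc]

lemma exists_cyclically_reduced :
    ∀ (n : ℕ) (w : HNNExtension.NormalWord.ReducedWord G A B), w.toList.length ≤ n →
      ∃ (p : H) (wc : HNNExtension.NormalWord.ReducedWord G A B),
        w.prod φ = p * wc.prod φ * p⁻¹ ∧
        wc.toList.length ≤ w.toList.length ∧
        (wc.toList = [] ∨ (wc.toList ≠ [] ∧ CRcond wc))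
  | 0, w, hlen => ⟨1, w, by simp, le_rfl,
      Or.inl (List.length_eq_zero_iff.mp (Nat.le_zero.mp hlen))⟩
  | n+1, w, hlen => by
    by_cases hl : w.toList = []
    · exact ⟨1, w, by simp, le_rfl, Or.inl hl⟩
    by_cases hcr : CRcond w
    · exact ⟨1, w, by simp, le_rfl, Or.inr ⟨hl, hcr⟩⟩
    -- not cyclically reduced
    rw [CRcond] at hcr
    push_neg at hcr
    obtain ⟨a, ha, b, hb, hmem, hne⟩ := hcr
    -- structure of the list
    obtain ⟨⟨u1, g1⟩, rest, hl2⟩ : ∃ x rest, w.toList = x :: rest := by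
      cases hw : w.toList with
      | nil => exact absurd hw hl
      | cons x rest => exact ⟨x, rest, rfl⟩
    obtain rfl : (u1, g1) = b := by
      rw [hl2] at hb
      simpa using hb
    have hrest : rest ≠ [] := by
      rintro rfl
      rw [hl2] at ha
      simp only [List.getLast?_singleton, Option.mem_def, Option.some.injEq] at ha
      exact hne (by rw [ha])
    have hlast : rest.getLast hrest = a := by
      rw [hl2] at ha
      rw [List.getLast?_eq_getLast (by simp), Option.mem_def, Option.some.injEq] at ha
      rw [← ha, List.getLast_cons hrest]
    have hu1 : u1 = -a.1 := units_eq_neg_of_ne hne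
    have hamem : a.2 * w.head ∈ toSubgroup A B a.1 := hmem
    set q : H := of w.head * (t : H) ^ (u1 : ℤ) with hq
    have key : q⁻¹ * w.prod φ * q
        = seqProd (φ := φ) g1 (rest.dropLast) *
          of ((toSubgroupEquiv φ a.1 ⟨a.2 * w.head, hamem⟩ : G)) := by
      rw [ReducedWord.prod_eq, hl2, seqProd, tprod_cons, hq]
      have hrw : tprod (φ := φ) rest * of w.head
          = tprod (φ := φ) (rest.dropLast) * ((t:H) ^ (a.1 : ℤ) * of (a.2 * w.head)) := by
        rw [← tprod_lmod (φ := φ) hrest, lmod_eq hrest, hlast, tprod_append]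
        simp [tprod]
      calc (of w.head * (t : H) ^ (u1 : ℤ))⁻¹ *
            (of w.head * ((t:H) ^ (u1 : ℤ) * of g1 * tprod rest)) *
            (of w.head * (t : H) ^ (u1 : ℤ))
          = of g1 * (tprod (φ := φ) rest * of w.head) * (t : H) ^ (u1 : ℤ) := by
            simp [mul_assoc]
        _ = of g1 * tprod (φ := φ) (rest.dropLast) *
              ((t:H) ^ (a.1 : ℤ) * of (a.2 * w.head) * (t : H) ^ ((-a.1 : ℤˣ) : ℤ)) := by
            rw [hrw, hu1]
            simp [mul_assoc]
        _ = _ := by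
            rw [t_conj_eq a.1 (a.2 * w.head) hamem]
            simp [seqProd, mul_assoc]
    obtain ⟨g', l', hgl, hlen'⟩ := exists_seqProd_mul_of (φ := φ) g1 rest.dropLast
      ((toSubgroupEquiv φ a.1 ⟨a.2 * w.head, hamem⟩ : G))
    have hlen2 : rest.dropLast.length + 2 = w.toList.length := by
      rw [hl2]
      simp only [List.length_cons, List.length_dropLast]
      have : rest.length ≠ 0 := fun hc => hrest (List.length_eq_zero_iff.mp hc)
      omega
    obtain ⟨rw1, hrw1, hrw1len⟩ := exists_reduced (φ := φ) n g' l' (by omega)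
    obtain ⟨p', wc, hwc, hwclen, hwccr⟩ := exists_cyclically_reduced n rw1 (by omega)
    refine ⟨q * p', wc, ?_, by omega, hwccr⟩
    have : w.prod φ = q * (q⁻¹ * w.prod φ * q) * q⁻¹ := by group
    rw [this, key, hgl, ← hrw1, hwc]
    group

end CyclicReduce

section InvWord

open HNNExtension

variable {k : ℕ} {A B : Subgroup G} {φ : A ≃* B} (πg : Fin k → G) (ι : Fin k → List (Fin k))

local notation "H" => HNNExtension G A B φ

def invLetter (ι : Fin k → List (Fin k)) : ΛH k → List (ΛH k) :=
  Sum.elim (fun a => (ι a).map Sum.inl) (fun b => [Sum.inr (!b)])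

def invWord (ι : Fin k → List (Fin k)) (w : List (ΛH k)) : List (ΛH k) :=
  (w.reverse.map (invLetter ι)).flatten

@[simp] lemma invWord_nil : invWord ι [] = [] := rfl

lemma invWord_cons (x : ΛH k) (w : List (ΛH k)) :
    invWord ι (x :: w) = invWord ι w ++ invLetter ι x := by
  simp [invWord]

lemma evalH_invWord (hι : ∀ a, evalG πg (ι a) = (πg a)⁻¹) (w : List (ΛH k)) :
    evalH (A := A) (B := B) (φ := φ) πg (invWord ι w)
      = (evalH (A := A) (B := B) (φ := φ) πg w)⁻¹ := by
  induction w with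
  | nil => simp
  | cons x w ih =>
    rw [invWord_cons, evalH_append, ih, evalH_cons, mul_inv_rev]
    congr 1
    cases x with
    | inl a => rw [invLetter, Sum.elim_inl, evalH_inl_map, hι, map_inv]; rfl
    | inr b => cases b <;> simp [invLetter]

def rLetters (w : List (ΛH k)) : List Bool :=
  (w.map (Sum.elim (fun _ => ([] : List Bool)) (fun b => [b]))).flatten

/-- number of `t`-letters in a word -/
def tlenW (w : List (ΛH k)) : ℕ := (rLetters w).length

@[simp] lemma rLetters_nil : rLetters (k := k) [] = [] := rfl

lemma rLetters_cons (x : ΛH k) (w : List (ΛH k)) :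
    rLetters (x :: w) = (Sum.elim (fun _ => ([] : List Bool)) (fun b => [b]) x) ++ rLetters w := by
  simp [rLetters]

lemma rLetters_append (w₁ w₂ : List (ΛH k)) :
    rLetters (w₁ ++ w₂) = rLetters w₁ ++ rLetters w₂ := by
  simp [rLetters]

lemma tlenW_append (w₁ w₂ : List (ΛH k)) :
    tlenW (w₁ ++ w₂) = tlenW w₁ + tlenW w₂ := by
  simp [tlenW, rLetters_append]

lemma tlenW_eq_parse (w : List (ΛH k)) : tlenW w = (parse w).2.length := by
  induction w with
  | nil => rfl
  | cons x w ih =>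
    cases x with
    | inl a => rw [tlenW, rLetters_cons] at *; simpa [parse] using ih
    | inr b => rw [tlenW, rLetters_cons] at *; simpa [parse] using ih

lemma tlenW_invWord (w : List (ΛH k)) : tlenW (invWord ι w) = tlenW w := by
  induction w with
  | nil => rfl
  | cons x w ih =>
    rw [invWord_cons, tlenW_append, ih]
    cases x with
    | inl a =>
      have : tlenW (invLetter ι (Sum.inl a)) = 0 := by
        rw [invLetter, Sum.elim_inl]
        induction ι a with
        | nil => rfl
        | cons c cs ihc => simpa [tlenW, rLetters_cons] using ihc
      rw [this, show tlenW (Sum.inl a :: w) = tlenW w by simp [tlenW, rLetters_cons]]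
      simp [tlenW]
    | inr b =>
      have h1 : tlenW (invLetter ι (Sum.inr b)) = 1 := rfl
      have h2 : tlenW (Sum.inr b :: w) = 1 + tlenW w := by
        simp only [tlenW, rLetters_cons, List.length_append, Sum.elim_inr,
          List.length_singleton]
      omega

lemma evalH_flatten_replicate (v : List (ΛH k)) (n : ℕ) :
    evalH (A := A) (B := B) (φ := φ) πg ((List.replicate n v).flatten)
      = (evalH (A := A) (B := B) (φ := φ) πg v) ^ n := by
  induction n with
  | zero => simp
  | succ n ih => rw [List.replicate_succ, List.flatten_cons, evalH_append, ih, pow_succ']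

lemma evalH_surjective (hgen : ∀ g : G, ∃ w : List (Fin k), evalG πg w = g)
    (hι : ∀ a, evalG πg (ι a) = (πg a)⁻¹) (x : H) :
    ∃ w : List (ΛH k), evalH (A := A) (B := B) (φ := φ) πg w = x := by
  induction x using HNNExtension.induction_on with
  | of g =>
    obtain ⟨w, hw⟩ := hgen g
    exact ⟨w.map Sum.inl, by rw [evalH_inl_map, hw]⟩
  | t => exact ⟨[Sum.inr true], by simp⟩
  | mul x y hx hy =>
    obtain ⟨w₁, hw₁⟩ := hx
    obtain ⟨w₂, hw₂⟩ := hy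
    exact ⟨w₁ ++ w₂, by rw [evalH_append, hw₁, hw₂]⟩
  | inv x hx =>
    obtain ⟨w, hw⟩ := hx
    exact ⟨invWord ι w, by rw [evalH_invWord πg ι hι, hw]⟩

end InvWord

section Elements

open HNNExtension

variable {k : ℕ} {A B : Subgroup G} {φ : A ≃* B}

local notation "H" => HNNExtension G A B φ

lemma rw_length_unique {w₁ w₂ : HNNExtension.NormalWord.ReducedWord G A B}
    (h : w₁.prod φ = w₂.prod φ) : w₁.toList.length = w₂.toList.length := by
  have := (ReducedWord.map_fst_eq_and_of_prod_eq φ h).1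
  simpa using congrArg List.length this

lemma rw_length_le {πg : Fin k → G} (W : List (ΛH k))
    (r : HNNExtension.NormalWord.ReducedWord G A B)
    (h : r.prod φ = evalH (A := A) (B := B) (φ := φ) πg W) : r.toList.length ≤ tlenW W := by
  obtain ⟨r', hr', hlen⟩ := exists_reduced (φ := φ) ((blocks πg (parse W).2).length)
    (evalG πg (parse W).1) (blocks πg (parse W).2) le_rfl
  have heq : r.toList.length = r'.toList.length :=
    rw_length_unique (by rw [hr', h, evalH_eq_seqProd])
  rw [heq, tlenW_eq_parse]
  exact hlen.trans (by simp [blocks])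

lemma of_mem_zpowers_iff (x g : G) :
    (of x : H) ∈ Subgroup.zpowers (of g : H) ↔ x ∈ Subgroup.zpowers g := by
  rw [Subgroup.mem_zpowers_iff, Subgroup.mem_zpowers_iff]
  constructor
  · rintro ⟨n, hn⟩
    exact ⟨n, of_injective φ (by rw [map_zpow]; exact hn)⟩
  · rintro ⟨n, hn⟩
    exact ⟨n, by rw [← map_zpow, hn]⟩

lemma conj_zpowers_iff (p x y : H) :
    x ∈ Subgroup.zpowers (p * y * p⁻¹) ↔ p⁻¹ * x * p ∈ Subgroup.zpowers y := by
  rw [Subgroup.mem_zpowers_iff, Subgroup.mem_zpowers_iff]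
  constructor
  · rintro ⟨n, hn⟩
    exact ⟨n, by rw [← hn, conj_zpow]; group⟩
  · rintro ⟨n, hn⟩
    refine ⟨n, ?_⟩
    rw [conj_zpow, hn]
    group

lemma mem_zpowers_one_iff (g : G) : g ∈ Subgroup.zpowers (1 : G) ↔ g = 1 := by
  rw [Subgroup.zpowers_one_eq_bot, Subgroup.mem_bot]

/-- extract the `G`-letters of a word -/
def extractG (w : List (ΛH k)) : List (Fin k) :=
  (w.map (Sum.elim (fun a => [a]) (fun _ => ([] : List (Fin k))))).flatten

lemma extractG_inl_map (g : List (Fin k)) : extractG (g.map Sum.inl) = g := by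
  induction g with
  | nil => rfl
  | cons a w ih => simpa [extractG] using ih

lemma parse2_nil_iff (w : List (ΛH k)) : (parse w).2 = [] ↔ rLetters w = [] := by
  rw [← List.length_eq_zero_iff, ← List.length_eq_zero_iff, ← tlenW_eq_parse, tlenW]

lemma word_of_parse2_nil {w : List (ΛH k)} (h : (parse w).2 = []) :
    w = ((parse w).1).map Sum.inl := by
  conv_lhs => rw [parse_reconstruct w]
  rw [h]
  simp

/-- Britton's lemma for membership in the image of `G` -/
lemma britton_range {πg : Fin k → G} {W : List (ΛH k)}
    (hred : BrittonReduced (A := A) (B := B) πg W)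
    (hmem : evalH (A := A) (B := B) (φ := φ) πg W ∈ (of.range : Subgroup H)) :
    (parse W).2 = [] ∧
      evalH (A := A) (B := B) (φ := φ) πg W = of (evalG πg (extractG W)) := by
  have h1 : (toRW πg hred).toList = [] :=
    ReducedWord.toList_eq_nil_of_mem_of_range φ _ (by rwa [toRW_prod])
  have h2 : (parse W).2 = [] := by
    have : blocks πg (parse W).2 = [] := h1
    rw [blocks] at this
    exact List.map_eq_nil_iff.mp this
  refine ⟨h2, ?_⟩
  have h3 := word_of_parse2_nil h2
  conv_lhs => rw [h3]
  rw [evalH_inl_map]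
  congr 1
  conv_rhs => rw [h3]
  rw [extractG_inl_map]

end Elements

section ComputabilityTools

variable {k : ℕ}

lemma evalH_of_parse2_nil {A B : Subgroup G} {φ : A ≃* B} {πg : Fin k → G} {W : List (ΛH k)}
    (h : (parse W).2 = []) :
    evalH (A := A) (B := B) (φ := φ) πg W = HNNExtension.of (evalG πg (extractG W)) := by
  have h3 := word_of_parse2_nil h
  conv_lhs => rw [h3]
  rw [evalH_inl_map]
  congr 1
  conv_rhs => rw [h3]
  rw [extractG_inl_map]

lemma primrec_invWord (ι : Fin k → List (Fin k)) : Primrec (invWord ι) := by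
  have h1 : Primrec (invLetter ι) := Primrec.dom_finite _
  exact Primrec.list_flatten.comp
    (Primrec.list_map Primrec.list_reverse (h1.comp Primrec.snd).to₂)

lemma primrec_rLetters : Primrec (rLetters (k := k)) :=
  Primrec.list_flatten.comp (Primrec.list_map Primrec.id
    ((Primrec.dom_finite (Sum.elim (fun _ => ([] : List Bool)) (fun b => [b]))).comp
      Primrec.snd).to₂)

lemma primrec_extractG : Primrec (extractG (k := k)) :=
  Primrec.list_flatten.comp (Primrec.list_map Primrec.id
    ((Primrec.dom_finite (Sum.elim (fun a => [a]) (fun _ => ([] : List (Fin k))))).comp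
      Primrec.snd).to₂)

lemma primrec_tlenW : Primrec (tlenW (k := k)) :=
  Primrec.list_length.comp primrec_rLetters

lemma powW_eq (v : List (ΛH k)) (n : ℕ) :
    ((List.range n).map (fun _ => v)).flatten = (List.replicate n v).flatten := by
  congr 1
  rw [List.map_const']
  simp

lemma primrec_powW (v : List (ΛH k)) :
    Primrec (fun n => (List.replicate n v).flatten : ℕ → List (ΛH k)) := by
  have : Primrec (fun n => ((List.range n).map (fun _ => v)).flatten : ℕ → List (ΛH k)) :=
    Primrec.list_flatten.comp (Primrec.list_map Primrec.list_range
      (Primrec.const v).to₂)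
  exact this.of_eq (fun n => powW_eq v n)

lemma band_eq_cond (b c : Bool) : (b && c) = cond b c false := by cases b <;> rfl

lemma bor_eq_cond (b c : Bool) : (b || c) = cond b true c := by cases b <;> rfl

lemma computable_band {α : Type*} [Primcodable α] {f g : α → Bool}
    (hf : Computable f) (hg : Computable g) : Computable fun a => f a && g a :=
  (Computable.cond hf hg (Computable.const false)).of_eq fun a => (band_eq_cond _ _).symm

lemma computable_bor {α : Type*} [Primcodable α] {f g : α → Bool}
    (hf : Computable f) (hg : Computable g) : Computable fun a => f a || g a :=
  (Computable.cond hf (Computable.const true) hg).of_eq fun a => (bor_eq_cond _ _).symm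

lemma computable_natrec_loop {α : Type*} [Primcodable α] {q : α → ℕ → Bool} {Nf : α → ℕ}
    (hq : Computable fun pr : α × ℕ => q pr.1 pr.2) (hN : Computable Nf) :
    Computable fun a => (Nat.rec false (fun n b => b || q a n) (Nf a) : Bool) := by
  have hh : Computable fun pr : α × (ℕ × Bool) => (pr.2.2 || q pr.1 pr.2.1) :=
    computable_bor (Computable.snd.comp Computable.snd)
      (hq.comp (Computable.pair Computable.fst (Computable.fst.comp Computable.snd)))
  exact (Computable.nat_rec hN (Computable.const false) hh.to₂).of_eq (fun a => rfl)

lemma natrec_or_eq_true (q : ℕ → Bool) :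
    ∀ N : ℕ, (Nat.rec false (fun n b => b || q n) N : Bool) = true ↔ ∃ n < N, q n = true
  | 0 => by simp
  | N+1 => by
    have ih := natrec_or_eq_true q N
    constructor
    · intro h
      rcases Bool.or_eq_true _ _ |>.mp h with h | h
      · obtain ⟨n, hn, hq⟩ := ih.mp h
        exact ⟨n, Nat.lt_succ_of_lt hn, hq⟩
      · exact ⟨N, Nat.lt_succ_self N, h⟩
    · rintro ⟨n, hn, hq⟩
      show (Nat.rec false (fun n b => b || q n) N || q N) = true
      rcases Nat.lt_succ_iff_lt_or_eq.mp hn with hn | rfl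
      · exact Bool.or_eq_true _ _ |>.mpr (Or.inl (ih.mpr ⟨n, hn, hq⟩))
      · exact Bool.or_eq_true _ _ |>.mpr (Or.inr hq)

end ComputabilityTools


open HNNExtension

/-- Let `G` be generated by finitely many elements `πg : Fin k → G`
such that the cyclic membership problem `u ∈ ⟨v⟩?` is decidable in `G` (for each
fixed `v`, uniformly in `u`).  Let `H = ⟨G, t ∣ t⁻¹ A t = B⟩` be an HNN extension of
`G` in which Britton-reduced forms are effectively computable.  Then the cyclic
membership problem is decidable in `H`. -/
theorem cyclic_membership_decidable_in_HNN (k : ℕ) (πg : Fin k → G)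
    (hgen : ∀ g : G, ∃ w : List (Fin k), evalG πg w = g)
    (A B : Subgroup G) (φ : A ≃* B)
    -- cyclic membership is decidable in `G`
    (hcyc : ∀ v : List (Fin k),
      ComputablePred (fun u : List (Fin k) =>
        evalG πg u ∈ Subgroup.zpowers (evalG πg v)))
    -- Britton-reduced forms in `H` are effectively computable
    (hBritton : ∃ f : List (ΛH k) → List (ΛH k), Computable f ∧
      ∀ w : List (ΛH k), evalH (A := A) (B := B) (φ := φ) πg (f w) = evalH πg w ∧
        BrittonReduced (A := A) (B := B) πg (f w)) :
    ∀ v : List (ΛH k),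
      ComputablePred (fun u : List (ΛH k) =>
        evalH (A := A) (B := B) (φ := φ) πg u ∈
          Subgroup.zpowers (evalH (A := A) (B := B) (φ := φ) πg v)) := by
  classical
  intro v
  obtain ⟨f, hfc, hf⟩ := hBritton
  choose ι hι using fun a : Fin k => hgen ((πg a)⁻¹)
  set x : HNNExtension G A B φ := evalH (A := A) (B := B) (φ := φ) πg v with hxdef
  have hfv := hf v
  obtain ⟨p, wc, hxp, _, hcase⟩ := exists_cyclically_reduced (φ := φ)
    (toRW πg hfv.2).toList.length (toRW πg hfv.2) le_rfl
  rw [toRW_prod, hfv.1] at hxp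
  obtain ⟨pW, hpW⟩ := evalH_surjective (A := A) (B := B) (φ := φ) πg ι hgen hι p
  obtain ⟨B0, hB0c, hB0⟩ := ComputablePred.computable_iff.1 (hcyc [])
  have hB0iff : ∀ z, B0 z = true ↔ evalG πg z = 1 := by
    intro z
    have h1 := iff_of_eq (congrFun hB0 z)
    rw [show evalG πg ([] : List (Fin k)) = 1 from rfl, mem_zpowers_one_iff] at h1
    exact h1.symm
  -- the word problem test
  set WPb : List (ΛH k) → Bool :=
    fun W => decide ((rLetters (f W)).length = 0) && B0 (extractG (f W)) with hWPbdef
  have hWPbc : Computable WPb := by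
    have c1 : Computable fun W : List (ΛH k) => decide ((rLetters (f W)).length = 0) :=
      ((Primrec.eq.comp Primrec.id (Primrec.const 0)).decide.to_comp).comp
        ((Primrec.list_length.comp primrec_rLetters).to_comp.comp hfc)
    have c2 : Computable fun W : List (ΛH k) => B0 (extractG (f W)) :=
      hB0c.comp (primrec_extractG.to_comp.comp hfc)
    exact (Computable.cond c1 c2 (Computable.const false)).of_eq
      (fun W => (band_eq_cond _ _).symm)
  have hWPiff : ∀ W, WPb W = true ↔ evalH (A := A) (B := B) (φ := φ) πg W = 1 := by
    intro W
    have hfe := (hf W).1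
    constructor
    · intro h
      rw [hWPbdef, Bool.and_eq_true, decide_eq_true_eq] at h
      obtain ⟨h1, h2⟩ := h
      have hp2 : (parse (f W)).2 = [] := by
        rw [parse2_nil_iff, ← List.length_eq_zero_iff]; exact h1
      have heval := evalH_of_parse2_nil (A := A) (B := B) (φ := φ) (πg := πg) hp2
      rw [← hfe, heval, (hB0iff _).mp h2, map_one]
    · intro h
      have hmem : evalH (A := A) (B := B) (φ := φ) πg (f W) ∈ (of.range : Subgroup _) := by
        rw [hfe, h]; exact one_mem _
      obtain ⟨hp2, heq⟩ := britton_range (hf W).2 hmem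
      have hone : evalG πg (extractG (f W)) = 1 :=
        of_injective φ (by rw [← heq, hfe, h, map_one])
      rw [hWPbdef, Bool.and_eq_true, decide_eq_true_eq]
      constructor
      · rw [show (rLetters (f W)).length = tlenW (f W) from rfl, tlenW_eq_parse, hp2]
        rfl
      · exact (hB0iff _).mpr hone
  rcases hcase with hnil | ⟨hne, hcr⟩
  · -- Case E : the cyclically reduced conjugate lies in G
    have hwc : wc.prod φ = of wc.head := by
      rw [ReducedWord.prod_eq, hnil]
      simp [seqProd]
    obtain ⟨vG, hvG⟩ := hgen wc.head
    obtain ⟨Bv, hBvc, hBv⟩ := ComputablePred.computable_iff.1 (hcyc vG)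
    have hBviff : ∀ z, Bv z = true ↔ evalG πg z ∈ Subgroup.zpowers (evalG πg vG) :=
      fun z => (iff_of_eq (congrFun hBv z)).symm
    set gW : List (ΛH k) → List (ΛH k) := fun u => (invWord ι pW ++ u) ++ pW with hgWdef
    have hgWc : Primrec gW := Primrec.list_append.comp
      (Primrec.list_append.comp (Primrec.const _) Primrec.id) (Primrec.const _)
    set F : List (ΛH k) → Bool := fun u =>
      decide ((rLetters (f (gW u))).length = 0) && Bv (extractG (f (gW u))) with hFdef
    have hFc : Computable F := by
      have c1 : Computable fun u : List (ΛH k) => decide ((rLetters (f (gW u))).length = 0) :=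
        ((Primrec.eq.comp Primrec.id (Primrec.const 0)).decide.to_comp).comp
          ((Primrec.list_length.comp primrec_rLetters).to_comp.comp (hfc.comp hgWc.to_comp))
      have c2 : Computable fun u : List (ΛH k) => Bv (extractG (f (gW u))) :=
        hBvc.comp (primrec_extractG.to_comp.comp (hfc.comp hgWc.to_comp))
      exact (Computable.cond c1 c2 (Computable.const false)).of_eq
        (fun u => (band_eq_cond _ _).symm)
    rw [ComputablePred.computable_iff]
    refine ⟨F, hFc, funext fun u => propext ?_⟩
    have hWeval : evalH (A := A) (B := B) (φ := φ) πg (gW u)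
        = p⁻¹ * evalH (A := A) (B := B) (φ := φ) πg u * p := by
      rw [hgWdef]
      simp only [evalH_append, evalH_invWord πg ι hι, hpW, mul_assoc]
    have hxw : x = p * of wc.head * p⁻¹ := by rw [hxdef, hxp, hwc]
    constructor
    · intro hu
      rw [hxw, conj_zpowers_iff, ← hWeval, ← (hf (gW u)).1] at hu
      have hle : Subgroup.zpowers (of wc.head : HNNExtension G A B φ) ≤ of.range :=
        Subgroup.zpowers_le.mpr ⟨wc.head, rfl⟩
      obtain ⟨hp2, heq⟩ := britton_range (hf (gW u)).2 (hle hu)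
      rw [heq, of_mem_zpowers_iff] at hu
      rw [hFdef, Bool.and_eq_true, decide_eq_true_eq]
      constructor
      · rw [show (rLetters (f (gW u))).length = tlenW (f (gW u)) from rfl, tlenW_eq_parse, hp2]
        rfl
      · exact (hBviff _).mpr (by rw [hvG]; exact hu)
    · intro hF
      rw [hFdef, Bool.and_eq_true, decide_eq_true_eq] at hF
      obtain ⟨h1, h2⟩ := hF
      have hp2 : (parse (f (gW u))).2 = [] := by
        rw [parse2_nil_iff, ← List.length_eq_zero_iff]; exact h1
      have heq := evalH_of_parse2_nil (A := A) (B := B) (φ := φ) (πg := πg) hp2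
      have h3 := (hBviff _).mp h2
      rw [hvG] at h3
      have hmem : evalH (A := A) (B := B) (φ := φ) πg (f (gW u))
          ∈ Subgroup.zpowers (of wc.head : HNNExtension G A B φ) := by
        rw [heq]
        exact (of_mem_zpowers_iff _ _).mpr h3
      rw [(hf (gW u)).1, hWeval] at hmem
      rw [hxw, conj_zpowers_iff]
      exact hmem
  · -- Case C : cyclically reduced with t-letters
    have hm : 1 ≤ wc.toList.length :=
      Nat.pos_of_ne_zero (fun h => hne (List.length_eq_zero_iff.mp h))
    set Nf : List (ΛH k) → ℕ := fun u => tlenW u + 2 * tlenW pW + 1 with hNfdef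
    have hNfc : Computable Nf :=
      (Primrec.nat_add.comp
        (Primrec.nat_add.comp primrec_tlenW (Primrec.const (2 * tlenW pW)))
        (Primrec.const 1)).to_comp.of_eq (fun u => by rw [hNfdef])
    set q : List (ΛH k) → ℕ → Bool := fun u n =>
      WPb (invWord ι u ++ (List.replicate n v).flatten)
        || WPb (u ++ (List.replicate n v).flatten) with hqdef
    have harg1 : Primrec fun pr : List (ΛH k) × ℕ =>
        invWord ι pr.1 ++ (List.replicate pr.2 v).flatten :=
      Primrec.list_append.comp ((primrec_invWord ι).comp Primrec.fst)
        ((primrec_powW v).comp Primrec.snd)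
    have harg2 : Primrec fun pr : List (ΛH k) × ℕ =>
        pr.1 ++ (List.replicate pr.2 v).flatten :=
      Primrec.list_append.comp Primrec.fst ((primrec_powW v).comp Primrec.snd)
    have hq2 : Computable fun pr : List (ΛH k) × ℕ => q pr.1 pr.2 := by
      have c1 := hWPbc.comp harg1.to_comp
      have c2 := hWPbc.comp harg2.to_comp
      exact (computable_bor c1 c2).of_eq (fun pr => by rw [hqdef])
    set F : List (ΛH k) → Bool := fun u =>
      Nat.rec false (fun n b => b || q u n) (Nf u) with hFdef
    have hFc : Computable F :=
      (computable_natrec_loop hq2 hNfc).of_eq (fun u => by rw [hFdef])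
    rw [ComputablePred.computable_iff]
    refine ⟨F, hFc, funext fun u => propext ?_⟩
    have hFiff : F u = true ↔ ∃ n < Nf u, q u n = true := natrec_or_eq_true (q u) (Nf u)
    have hbound : ∀ (n : ℕ) (W : List (ΛH k)),
        wc.prod φ ^ (n + 1) = evalH (A := A) (B := B) (φ := φ) πg W →
        n + 1 ≤ tlenW W := by
      intro n W hW
      obtain ⟨rww, hrww, hrwwlen⟩ := exists_rw_pow (φ := φ) wc hne hcr n
      have hle := rw_length_le W rww (by rw [hrww, hW])
      rw [hrwwlen] at hle
      calc n + 1 ≤ (n + 1) * wc.toList.length := Nat.le_mul_of_pos_right _ hm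
        _ ≤ tlenW W := hle
    constructor
    · intro hu
      obtain ⟨n0, hn0⟩ := Subgroup.mem_zpowers_iff.mp hu
      rw [hFiff]
      rcases le_or_gt 0 n0 with hpos | hneg
      · obtain ⟨n, hneq⟩ : ∃ n : ℕ, (n : ℤ) = n0 := ⟨n0.toNat, Int.toNat_of_nonneg hpos⟩
        have hxn : x ^ n = evalH (A := A) (B := B) (φ := φ) πg u := by
          rw [← hn0, ← hneq, zpow_natCast]
        have hlt : n < Nf u := by
          rcases Nat.eq_zero_or_pos n with rfl | hn1
          · show 0 < tlenW u + 2 * tlenW pW + 1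
            omega
          · obtain ⟨n', rfl⟩ : ∃ n', n = n' + 1 := ⟨n - 1, by omega⟩
            have hcp : wc.prod φ ^ (n' + 1)
                = evalH (A := A) (B := B) (φ := φ) πg ((invWord ι pW ++ u) ++ pW) := by
              have h1 : wc.prod φ ^ (n' + 1) = p⁻¹ * x ^ (n' + 1) * p := by
                rw [hxdef, hxp, conj_pow]; group
              rw [h1, hxn]
              simp only [evalH_append, evalH_invWord πg ι hι, hpW, mul_assoc]
            have hb := hbound n' _ hcp
            rw [tlenW_append, tlenW_append, tlenW_invWord] at hb
            show n' + 1 < tlenW u + 2 * tlenW pW + 1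
            omega
        refine ⟨n, hlt, ?_⟩
        show (WPb (invWord ι u ++ (List.replicate n v).flatten)
          || WPb (u ++ (List.replicate n v).flatten)) = true
        refine Bool.or_eq_true _ _ |>.mpr (Or.inl ((hWPiff _).mpr ?_))
        rw [evalH_append, evalH_invWord πg ι hι, evalH_flatten_replicate, ← hxdef, hxn,
          inv_mul_cancel]
      · obtain ⟨n, hneq⟩ : ∃ n : ℕ, (n : ℤ) = -n0 :=
          ⟨(-n0).toNat, Int.toNat_of_nonneg (by omega)⟩
        have hxn : x ^ n = (evalH (A := A) (B := B) (φ := φ) πg u)⁻¹ := by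
          rw [← zpow_natCast, hneq, zpow_neg, hn0]
        have hn1 : 1 ≤ n := by omega
        have hlt : n < Nf u := by
          obtain ⟨n', rfl⟩ : ∃ n', n = n' + 1 := ⟨n - 1, by omega⟩
          have hcp : wc.prod φ ^ (n' + 1)
              = evalH (A := A) (B := B) (φ := φ) πg ((invWord ι pW ++ invWord ι u) ++ pW) := by
            have h1 : wc.prod φ ^ (n' + 1) = p⁻¹ * x ^ (n' + 1) * p := by
              rw [hxdef, hxp, conj_pow]; group
            rw [h1, hxn]
            simp only [evalH_append, evalH_invWord πg ι hι, hpW, mul_assoc]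
          have hb := hbound n' _ hcp
          rw [tlenW_append, tlenW_append, tlenW_invWord, tlenW_invWord] at hb
          show n' + 1 < tlenW u + 2 * tlenW pW + 1
          omega
        refine ⟨n, hlt, ?_⟩
        show (WPb (invWord ι u ++ (List.replicate n v).flatten)
          || WPb (u ++ (List.replicate n v).flatten)) = true
        refine Bool.or_eq_true _ _ |>.mpr (Or.inr ((hWPiff _).mpr ?_))
        rw [evalH_append, evalH_flatten_replicate, ← hxdef, hxn, mul_inv_cancel]
    · intro hF
      obtain ⟨n, _, hq⟩ := hFiff.mp hF
      have hq' : (WPb (invWord ι u ++ (List.replicate n v).flatten)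
          || WPb (u ++ (List.replicate n v).flatten)) = true := hq
      rcases Bool.or_eq_true _ _ |>.mp hq' with h | h
      · have h1 := (hWPiff _).mp h
        rw [evalH_append, evalH_invWord πg ι hι, evalH_flatten_replicate, ← hxdef,
          inv_mul_eq_one] at h1
        exact Subgroup.mem_zpowers_iff.mpr ⟨(n : ℤ), by rw [zpow_natCast, ← h1]⟩
      · have h1 := (hWPiff _).mp h
        rw [evalH_append, evalH_flatten_replicate, ← hxdef, mul_eq_one_iff_eq_inv] at h1
        exact Subgroup.mem_zpowers_iff.mpr
          ⟨-(n : ℤ), by rw [zpow_neg, zpow_natCast, ← h1]⟩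


end Stmt18
end
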